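/- arXiv:2403.07085 — 6 statements merged into one kernel-verified Lean document; each statement's English description precedes it below -/
import Mathlib

section
/- Suppose φ : [0,∞) → [0,∞) is a non-degenerate Orlicz function such that for every finitely supported x ∈ span{e_n : n ∈ ℕ} ⊆ ℓ_φ and every n ∈ ℕ one has φ(‖P_n(x)‖_φ) + φ(‖(I − P_n)(x)‖_φ) = φ(‖x‖_φ), where P_n is the canonical projection onto the first n coordinates. Then there exists q ∈ [1,∞) such that φ(t) = φ(1)·t^q for all t ∈ [0,∞). -/
open Metric Set Filter
open Topology
open scoped NNReal ENNReal

/-- A non-degenerate Orlicz function (viewed as a function on `[0,∞)`):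
`M 0 = 0`, `M t > 0` for `t > 0`, `M` is continuous, convex and strictly
increasing on `[0,∞)`, and `M t → ∞` as `t → ∞`. -/
structure IsOrliczFunction (M : ℝ → ℝ) : Prop where
  map_zero : M 0 = 0
  pos : ∀ t : ℝ, 0 < t → 0 < M t
  continuousOn : ContinuousOn M (Ici 0)
  convexOn : ConvexOn ℝ (Ici 0) M
  strictMonoOn : StrictMonoOn M (Ici 0)
  tendsto_atTop : Tendsto M atTop atTop

/-- The Luxemburg norm of a real sequence:
`‖x‖_M = inf {λ > 0 : ∑ₙ M(|xₙ|/λ) ≤ 1}`. -/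
noncomputable def luxNorm (M : ℝ → ℝ) (x : ℕ → ℝ) : ℝ :=
  sInf {l : ℝ | 0 < l ∧ ∑' n, ENNReal.ofReal (M (|x n| / l)) ≤ 1}

/-- Membership in the Orlicz sequence space `ℓ_M`:
`∑ₙ M(|xₙ|/λ) < ∞` for some `λ > 0`. -/
def MemOrlicz (M : ℝ → ℝ) (x : ℕ → ℝ) : Prop :=
  ∃ l : ℝ, 0 < l ∧ (∑' n, ENNReal.ofReal (M (|x n| / l))) < ⊤

/-- The canonical projection of a sequence onto its first `n` coordinates. -/
def projSeq (n : ℕ) (x : ℕ → ℝ) : ℕ → ℝ := fun i => if i < n then x i else 0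

/-- The inverse of a non-degenerate Orlicz function, regarded as a bijection
of `[0,∞)` onto itself. -/
noncomputable def orliczInv (M : ℝ → ℝ) (y : ℝ) : ℝ :=
  sInf {t : ℝ | 0 ≤ t ∧ y ≤ M t}

lemma exists_phi_eq {φ : ℝ → ℝ} (hφ : IsOrliczFunction φ) {r : ℝ} (hr : 0 < r) :
    ∃ t, 0 < t ∧ φ t = r := by
  obtain ⟨T, hT1, hT0⟩ := ((hφ.tendsto_atTop.eventually_ge_atTop r).and
    (eventually_ge_atTop (0:ℝ))).exists
  have h : r ∈ Icc (φ 0) (φ T) := ⟨by rw [hφ.map_zero]; exact hr.le, hT1⟩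
  obtain ⟨t, ht, hteq⟩ := intermediate_value_Icc hT0
    (hφ.continuousOn.mono (Icc_subset_Ici_self)) h
  refine ⟨t, ?_, hteq⟩
  rcases eq_or_lt_of_le ht.1 with h0 | h0
  · exfalso; rw [← h0, hφ.map_zero] at hteq; linarith
  · exact h0

lemma lux_indicator {φ : ℝ → ℝ} (hφ : IsOrliczFunction φ) {c : ℝ} (hc : 0 < c)
    (s : Finset ℕ) {τ : ℝ} (hτ : 0 < τ) (hτeq : φ τ = 1 / (s.card : ℝ))
    (hcard : 1 ≤ s.card) (x : ℕ → ℝ) (hx : ∀ n, x n = if n ∈ s then c else 0) :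
    luxNorm φ x = c / τ := by
  have hcardR : (0:ℝ) < (s.card : ℝ) := by exact_mod_cast hcard
  have key : ∀ l : ℝ, ∑' n, ENNReal.ofReal (φ (|x n| / l))
      = (s.card : ℝ≥0∞) * ENNReal.ofReal (φ (c / l)) := by
    intro l
    rw [tsum_eq_sum (s := s) (fun b hb => by
      simp [hx b, if_neg hb, hφ.map_zero])]
    rw [Finset.sum_congr rfl (fun n hn => by
      rw [hx n, if_pos hn, abs_of_pos hc] : ∀ n ∈ s,
        ENNReal.ofReal (φ (|x n| / l)) = ENNReal.ofReal (φ (c / l)))]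
    rw [Finset.sum_const, nsmul_eq_mul]
  have hL : 0 < c / τ := div_pos hc hτ
  have hset : {l : ℝ | 0 < l ∧ ∑' n, ENNReal.ofReal (φ (|x n| / l)) ≤ 1} = Ici (c / τ) := by
    ext l
    simp only [mem_setOf_eq, key, mem_Ici]
    constructor
    · rintro ⟨hl, hle⟩
      by_contra hlt
      push_neg at hlt
      have hlτ : l * τ < c := (lt_div_iff₀ hτ).mp hlt
      have hcl : τ < c / l := (lt_div_iff₀ hl).mpr (by nlinarith)
      have hφlt : 1 / (s.card : ℝ) < φ (c / l) := by
        rw [← hτeq]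
        exact hφ.strictMonoOn (mem_Ici.mpr hτ.le) (mem_Ici.mpr (le_trans hτ.le hcl.le)) hcl
      have h3 : 1 < (s.card : ℝ) * φ (c / l) := by
        have := (div_lt_iff₀ hcardR).mp hφlt
        nlinarith
      have : (1 : ℝ≥0∞) < (s.card : ℝ≥0∞) * ENNReal.ofReal (φ (c / l)) := by
        have h2 : (s.card : ℝ≥0∞) * ENNReal.ofReal (φ (c / l))
            = ENNReal.ofReal ((s.card : ℝ) * φ (c / l)) := by
          rw [ENNReal.ofReal_mul (by positivity), ENNReal.ofReal_natCast]
        rw [h2, ← ENNReal.ofReal_one, ENNReal.ofReal_lt_ofReal_iff (by nlinarith)]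
        exact h3
      exact absurd hle (not_le.2 this)
    · intro hl
      have hl0 : 0 < l := lt_of_lt_of_le hL hl
      refine ⟨hl0, ?_⟩
      have hlτ : c ≤ l * τ := (div_le_iff₀ hτ).mp hl
      have hcl : c / l ≤ τ := (div_le_iff₀ hl0).mpr (by nlinarith)
      have hφle : φ (c / l) ≤ 1 / (s.card : ℝ) := by
        rw [← hτeq]
        exact hφ.strictMonoOn.monotoneOn (mem_Ici.mpr (by positivity)) (mem_Ici.mpr hτ.le) hcl
      have h4 : (s.card : ℝ) * φ (c / l) ≤ 1 := by
        have := (le_div_iff₀ hcardR).mp hφle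
        nlinarith
      calc (s.card : ℝ≥0∞) * ENNReal.ofReal (φ (c / l))
          = ENNReal.ofReal ((s.card : ℝ) * φ (c / l)) := by
            rw [ENNReal.ofReal_mul (by positivity), ENNReal.ofReal_natCast]
        _ ≤ ENNReal.ofReal 1 := ENNReal.ofReal_le_ofReal h4
        _ = 1 := ENNReal.ofReal_one
  rw [luxNorm, hset, csInf_Ici]

/-- Proposition: if a non-degenerate Orlicz function `φ` satisfies
`φ(‖Pₙ x‖_φ) + φ(‖(I - Pₙ) x‖_φ) = φ(‖x‖_φ)` for all finitely supported sequences
`x` and all `n`, then `φ(t) = φ(1)·t^q` for some `q ∈ [1,∞)`. -/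
theorem orlicz_eq_power_of_luxNorm_eq (φ : ℝ → ℝ) (hφ : IsOrliczFunction φ)
    (heq : ∀ x : ℕ → ℝ, (Function.support x).Finite → ∀ n : ℕ,
      φ (luxNorm φ (projSeq n x)) + φ (luxNorm φ (x - projSeq n x)) =
        φ (luxNorm φ x)) :
    ∃ q : ℝ, 1 ≤ q ∧ ∀ t : ℝ, 0 ≤ t → φ t = φ 1 * t ^ q := by
  have hτex : ∀ k : ℕ, ∃ t, 0 < t ∧ φ t = 1 / ((k : ℝ) + 1) :=
    fun k => exists_phi_eq hφ (by positivity)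
  choose τ hτpos hτeq using hτex
  have star : ∀ k : ℕ, ∀ c : ℝ, 0 < c → φ (c / τ k) = ((k : ℝ) + 1) * φ (c / τ 0) := by
    intro k
    induction k with
    | zero => intro c hc; push_cast; ring
    | succ k ih =>
      intro c hc
      set K := k + 2 with hK
      set x : ℕ → ℝ := fun i => if i < K then c else 0 with hxdef
      have hsupp : (Function.support x).Finite := by
        apply Set.Finite.subset (Finset.range K).finite_toSet
        intro i hi
        simp only [Function.mem_support, hxdef] at hi
        by_contra h
        simp only [Finset.coe_range, mem_Iio, not_lt] at h
        exact hi (if_neg (by omega))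
      have h1 := heq x hsupp 1
      have lux1 : luxNorm φ (projSeq 1 x) = c / τ 0 := by
        apply lux_indicator hφ hc {0} (hτpos 0) (by simpa using hτeq 0) (by simp)
        intro n
        match n with
        | 0 => simp [projSeq, hxdef, hK]
        | n + 1 => simp [projSeq]
      have lux2 : luxNorm φ (x - projSeq 1 x) = c / τ k := by
        apply lux_indicator hφ hc (Finset.Ico 1 K) (hτpos k)
          (by rw [Nat.card_Ico, show K - 1 = k + 1 by omega]; simpa using hτeq k) (by simp [hK])
        intro n
        match n with
        | 0 => simp [projSeq, hxdef]
        | n + 1 =>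
          simp only [Pi.sub_apply, projSeq, hxdef, Finset.mem_Ico]
          by_cases hn : n + 1 < K <;> simp [hn] <;> omega
      have lux3 : luxNorm φ x = c / τ (k + 1) := by
        apply lux_indicator hφ hc (Finset.range K) (hτpos (k+1))
          (by rw [Finset.card_range]; rw [hτeq (k+1)]; push_cast [hK]; ring_nf) (by simp [hK])
        intro n
        simp [hxdef, Finset.mem_range]
      rw [lux1, lux2, lux3, ih c hc] at h1
      rw [← h1]; push_cast; ring
  -- reflection lemmas
  have hle' : ∀ a b : ℝ, 0 ≤ a → 0 ≤ b → φ a ≤ φ b → a ≤ b := by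
    intro a b ha hb h
    by_contra h'
    push_neg at h'
    exact absurd h (not_le.2 (hφ.strictMonoOn (mem_Ici.mpr hb) (mem_Ici.mpr ha) h'))
  have hlt' : ∀ a b : ℝ, 0 ≤ a → 0 ≤ b → φ a < φ b → a < b := by
    intro a b ha hb h
    by_contra h'
    push_neg at h'
    exact absurd (hφ.strictMonoOn.monotoneOn (mem_Ici.mpr hb) (mem_Ici.mpr ha) h') (not_le.2 h)
  have hinj : ∀ a b : ℝ, 0 ≤ a → 0 ≤ b → φ a = φ b → a = b := fun a b ha hb h =>
    le_antisymm (hle' a b ha hb h.le) (hle' b a hb ha h.ge)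
  -- the multiplicative sequence
  set g : ℕ → ℝ := fun k => τ 0 / τ (k - 1) with hgdef
  have hgpos : ∀ k, 0 < g k := fun k => div_pos (hτpos 0) (hτpos _)
  have hg1 : g 1 = 1 := div_self (ne_of_gt (hτpos 0))
  have hg : ∀ k : ℕ, 1 ≤ k → ∀ u : ℝ, 0 < u → φ (u * g k) = (k : ℝ) * φ u := by
    intro k hk u hu
    have hc : 0 < u * τ 0 := mul_pos hu (hτpos 0)
    have h1 : u * τ 0 / τ (k - 1) = u * g k := mul_div_assoc u (τ 0) (τ (k - 1))
    have h2 : u * τ 0 / τ 0 = u := mul_div_cancel_right₀ u (ne_of_gt (hτpos 0))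
    have := star (k - 1) (u * τ 0) hc
    rw [h1, h2] at this
    rw [this]
    congr 1
    have : k - 1 + 1 = k := by omega
    exact_mod_cast congrArg (Nat.cast (R := ℝ)) this
  have hφ1 : 0 < φ 1 := hφ.pos 1 one_pos
  have hgmono : ∀ a b : ℕ, 1 ≤ a → a ≤ b → g a ≤ g b := by
    intro a b ha hab
    apply hle' _ _ (hgpos a).le (hgpos b).le
    have h1 := hg a ha 1 one_pos
    have h2 := hg b (le_trans ha hab) 1 one_pos
    rw [one_mul] at h1 h2
    rw [h1, h2]
    have : (a:ℝ) ≤ (b:ℝ) := by exact_mod_cast hab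
    nlinarith
  have hg2 : 1 < g 2 := by
    apply hlt' _ _ zero_le_one (hgpos 2).le
    have h2 := hg 2 (by norm_num) 1 one_pos
    rw [one_mul] at h2
    rw [h2]
    push_cast
    nlinarith
  have hgmul : ∀ k m : ℕ, 1 ≤ k → 1 ≤ m → g (k * m) = g k * g m := by
    intro k m hk hm
    apply hinj _ _ (hgpos _).le (mul_pos (hgpos k) (hgpos m)).le
    have h1 := hg (k * m) (Nat.one_le_iff_ne_zero.2 (Nat.mul_ne_zero (by omega) (by omega))) 1 one_pos
    rw [one_mul] at h1
    have h2 := hg k hk (g m) (hgpos m)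
    have h3 := hg m hm 1 one_pos
    rw [one_mul] at h3
    rw [h1, mul_comm (g k) (g m), h2, h3]
    push_cast
    ring
  have hgpow : ∀ k : ℕ, 1 ≤ k → ∀ i : ℕ, g (k ^ i) = g k ^ i := by
    intro k hk i
    induction i with
    | zero => simpa using hg1
    | succ i ih =>
      rw [pow_succ, pow_succ, ← ih, ← hgmul _ _ (Nat.one_le_pow _ _ hk) hk]
  -- multiplicative and monotone implies power
  set C : ℝ := Real.log (g 2) with hC
  set D : ℝ := Real.log 2 with hD
  have hCpos : 0 < C := Real.log_pos hg2
  have hDpos : 0 < D := Real.log_pos one_lt_two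
  have key2 : ∀ k : ℕ, 2 ≤ k → Real.log (g k) * D = C * Real.log k := by
    intro k hk
    set A : ℝ := Real.log (g k) with hA
    set B : ℝ := Real.log k with hB
    have hgk1 : 1 < g k := lt_of_lt_of_le hg2 (hgmono 2 k (by omega) hk)
    have hApos : 0 < A := Real.log_pos hgk1
    have hBpos : 0 < B := Real.log_pos (by exact_mod_cast hk)
    have hk1 : 1 ≤ k := by omega
    have habs : ∀ i : ℕ, |(i : ℝ) * (A * D - B * C)| ≤ C * D := by
      intro i
      set j : ℕ := Nat.log 2 (k ^ i) with hj
      have hki : 1 ≤ k ^ i := Nat.one_le_pow _ _ (by omega)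
      have hlow : 2 ^ j ≤ k ^ i := Nat.pow_log_le_self 2 (by omega)
      have hhigh : k ^ i < 2 ^ (j + 1) := Nat.lt_pow_succ_log_self (by norm_num) _
      -- bounds for g
      have hg_low : g 2 ^ j ≤ g k ^ i := by
        rw [← hgpow 2 (by norm_num) j, ← hgpow k hk1 i]
        exact hgmono _ _ (Nat.one_le_pow _ _ (by norm_num)) hlow
      have hg_high : g k ^ i ≤ g 2 ^ (j + 1) := by
        rw [← hgpow 2 (by norm_num) (j+1), ← hgpow k hk1 i]
        exact hgmono _ _ (Nat.one_le_pow _ _ (by omega)) hhigh.le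
      -- log bounds for g
      have hlogg_low : (j : ℝ) * C ≤ (i : ℝ) * A := by
        have := Real.log_le_log (by positivity) hg_low
        rwa [Real.log_pow, Real.log_pow] at this
      have hlogg_high : (i : ℝ) * A ≤ ((j : ℝ) + 1) * C := by
        have := Real.log_le_log (by positivity) hg_high
        rw [Real.log_pow, Real.log_pow] at this
        push_cast at this
        linarith
      -- log bounds for k
      have hlog_low : (j : ℝ) * D ≤ (i : ℝ) * B := by
        have h' : ((2:ℝ)) ^ j ≤ ((k:ℝ)) ^ i := by exact_mod_cast hlow
        have := Real.log_le_log (by positivity) h'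
        rwa [Real.log_pow, Real.log_pow] at this
      have hlog_high : (i : ℝ) * B ≤ ((j : ℝ) + 1) * D := by
        have h' : ((k:ℝ)) ^ i ≤ ((2:ℝ)) ^ (j + 1) := by exact_mod_cast hhigh.le
        have := Real.log_le_log (by positivity) h'
        rw [Real.log_pow, Real.log_pow] at this
        push_cast at this
        linarith
      rw [abs_le]
      constructor <;> nlinarith
    by_contra hne
    have hε : 0 < |A * D - B * C| := abs_pos.2 (fun h => hne (by linarith [sub_eq_zero.1 h]))
    obtain ⟨i, hi⟩ := exists_nat_gt (C * D / |A * D - B * C|)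
    have hi' : C * D < (i : ℝ) * |A * D - B * C| := by
      rw [div_lt_iff₀ hε] at hi
      linarith
    have := habs i
    rw [abs_mul, abs_of_nonneg (Nat.cast_nonneg i)] at this
    linarith
  set α : ℝ := C / D with hα
  have hαpos : 0 < α := div_pos hCpos hDpos
  have hgk_eq : ∀ k : ℕ, 1 ≤ k → g k = (k : ℝ) ^ α := by
    intro k hk
    rcases eq_or_lt_of_le hk with h1 | h2
    · rw [← h1, hg1, Nat.cast_one, Real.one_rpow]
    · have hk2 : 2 ≤ k := h2
      have hkpos : (0:ℝ) < k := by positivity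
      have hlog : Real.log (g k) = Real.log k * α := by
        have := key2 k hk2
        rw [hα]
        field_simp
        linarith [this]
      rw [Real.rpow_def_of_pos hkpos, ← hlog, Real.exp_log (hgpos k)]
  -- scaling identity for positive rationals
  have hpow : ∀ k m : ℕ, 1 ≤ k → 1 ≤ m → ∀ t : ℝ, 0 < t →
      φ (t * ((k : ℝ) / (m : ℝ)) ^ α) = ((k : ℝ) / (m : ℝ)) * φ t := by
    intro k m hk hm t ht
    have hmpos : (0:ℝ) < (m:ℝ) := by exact_mod_cast hm
    have hkpos : (0:ℝ) < (k:ℝ) := by exact_mod_cast hk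
    have hm_rpow : (0:ℝ) < (m:ℝ) ^ α := Real.rpow_pos_of_pos hmpos α
    have hk_rpow : (0:ℝ) < (k:ℝ) ^ α := Real.rpow_pos_of_pos hkpos α
    set u : ℝ := t / (m:ℝ) ^ α with hu
    have hupos : 0 < u := div_pos ht hm_rpow
    have h1 : φ (u * g m) = (m:ℝ) * φ u := hg m hm u hupos
    rw [hgk_eq m hm] at h1
    have hum : u * (m:ℝ) ^ α = t := div_mul_cancel₀ t (ne_of_gt hm_rpow)
    rw [hum] at h1
    have h2 : φ (u * g k) = (k:ℝ) * φ u := hg k hk u hupos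
    rw [hgk_eq k hk] at h2
    have h3 : u * (k:ℝ) ^ α = t * ((k : ℝ) / (m : ℝ)) ^ α := by
      rw [Real.div_rpow hkpos.le hmpos.le, hu]
      ring
    rw [h3] at h2
    rw [h2, h1]
    field_simp
  -- the formula for positive t
  have hform : ∀ t : ℝ, 0 < t → φ t = φ 1 * t ^ α⁻¹ := by
    intro t ht
    set s : ℝ := t ^ α⁻¹ with hs
    have hspos : 0 < s := Real.rpow_pos_of_pos ht _
    have hrex : ∀ n : ℕ, ∃ ρ : ℚ, max (s/2) (s - 1/(n+1)) < (ρ:ℝ) ∧ (ρ:ℝ) < s := by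
      intro n
      apply exists_rat_btwn
      apply max_lt (by linarith)
      have : (0:ℝ) < 1/((n:ℝ)+1) := by positivity
      linarith
    choose r hr1 hr2 using hrex
    have hrpos : ∀ n, (0:ℝ) < (r n : ℝ) := fun n =>
      lt_trans (lt_of_lt_of_le (by linarith : (0:ℝ) < s/2) (le_max_left _ _)) (hr1 n)
    have htend : Tendsto (fun n => ((r n : ℝ))) atTop (𝓝 s) := by
      apply tendsto_of_tendsto_of_tendsto_of_le_of_le
        (g := fun n : ℕ => s - 1/((n:ℝ)+1)) (h := fun _ : ℕ => s)
      · have h0 : Tendsto (fun n : ℕ => 1/((n:ℝ)+1)) atTop (𝓝 0) :=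
          tendsto_one_div_add_atTop_nhds_zero_nat
        have h1 : Tendsto (fun _ : ℕ => s) atTop (𝓝 s) := tendsto_const_nhds
        have := h1.sub h0
        simpa using this
      · exact tendsto_const_nhds
      · intro n
        exact le_trans (le_max_right _ _) (hr1 n).le
      · exact fun n => (hr2 n).le
    have hval : ∀ n : ℕ, φ ((r n : ℝ) ^ α) = (r n : ℝ) * φ 1 := by
      intro n
      have hρ : 0 < r n := by exact_mod_cast hrpos n
      have hnum : 0 < (r n).num := Rat.num_pos.2 hρ
      set k : ℕ := (r n).num.toNat with hk
      set m : ℕ := (r n).den with hm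
      have hk1 : 1 ≤ k := by omega
      have hm1 : 1 ≤ m := (r n).den_pos
      have hcast : ((k : ℝ) / (m : ℝ)) = ((r n : ℝ)) := by
        rw [Rat.cast_def]
        congr 1
        rw [hk]
        exact_mod_cast Int.toNat_of_nonneg hnum.le
      have := hpow k m hk1 hm1 1 one_pos
      rw [hcast, one_mul] at this
      rw [this]
    have hsα : s ^ α = t := by
      rw [hs, ← Real.rpow_mul ht.le, inv_mul_cancel₀ (ne_of_gt hαpos), Real.rpow_one]
    have hcont1 : Tendsto (fun n => ((r n : ℝ)) ^ α) atTop (𝓝 t) := by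
      have hca : ContinuousAt (fun x : ℝ => x ^ α) s :=
        Real.continuousAt_rpow_const s α (Or.inl (ne_of_gt hspos))
      have := hca.tendsto.comp htend
      simp only [Function.comp_def] at this
      rwa [hsα] at this
    have hφt : Tendsto (fun n => φ (((r n : ℝ)) ^ α)) atTop (𝓝 (φ t)) := by
      have hφc : ContinuousAt φ t := hφ.continuousOn.continuousAt (Ici_mem_nhds ht)
      exact hφc.tendsto.comp hcont1
    have hφt' : Tendsto (fun n => ((r n : ℝ)) * φ 1) atTop (𝓝 (φ t)) := by
      simpa only [hval] using hφt
    have hrhs : Tendsto (fun n => ((r n : ℝ)) * φ 1) atTop (𝓝 (s * φ 1)) :=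
      htend.mul tendsto_const_nhds
    rw [tendsto_nhds_unique hφt' hrhs, mul_comm]
  refine ⟨α⁻¹, ?_, ?_⟩
  · have hhalf : φ (1/2) ≤ (1/2) * φ 1 := by
      have := hφ.convexOn.2 (mem_Ici.mpr le_rfl) (mem_Ici.mpr zero_le_one)
        (by norm_num : (0:ℝ) ≤ 1/2) (by norm_num : (0:ℝ) ≤ 1/2) (by norm_num)
      simpa [hφ.map_zero] using this
    have h12 := hform (1/2) (by norm_num)
    rw [h12] at hhalf
    have h2 : ((1:ℝ)/2) ^ α⁻¹ ≤ ((1:ℝ)/2) ^ (1:ℝ) := by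
      rw [Real.rpow_one]
      nlinarith
    exact (Real.rpow_le_rpow_left_iff_of_base_lt_one (by norm_num) (by norm_num)).1 h2
  · intro t ht
    rcases eq_or_lt_of_le ht with h0 | h0
    · rw [← h0, hφ.map_zero, Real.zero_rpow (inv_ne_zero (ne_of_gt hαpos)), mul_zero]
    · exact hform t h0
end

section
/- Let φ be a non-degenerate Orlicz function. Then the following are equivalent: (1) for every finitely supported x ∈ span{e_n} ⊆ ℓ_φ and every n ∈ ℕ, φ(‖P_n(x)‖_φ) + φ(‖(I − P_n)(x)‖_φ) = φ(‖x‖_φ); (2) for any finite sequences (s_1,…,s_k) and (t_1,…,t_l) of nonnegative numbers with Σ_{i=1}^k φ(s_i) = 1 = Σ_{j=1}^l φ(t_j), and any λ, μ > 0, one has Σ_{i=1}^k φ( λ s_i / φ⁻¹(φ(λ)+φ(μ)) ) + Σ_{j=1}^l φ( μ t_j / φ⁻¹(φ(λ)+φ(μ)) ) = 1. -/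
open Metric Set Filter
open scoped NNReal ENNReal

/-!
For a finitely supported `x ≠ 0` the Luxemburg norm `‖x‖_φ` is the unique `c > 0` with
`∑ₙ φ(|xₙ| / c) = 1`, since the modular `c ↦ ∑ₙ φ(|xₙ| / c)` is continuous and strictly
decreasing from `∞` to `0`. If `P_n x` and `x - P_n x` are nonzero, with norms `λ` and `μ`, put
`s = |P_n x| / λ` and `t = |x - P_n x| / μ`: then `∑ φ(s) = ∑ φ(t) = 1`, and the left side of (2)
is the modular of `x` at `d = φ⁻¹(φ(λ) + φ(μ))`. So (2) says `‖x‖_φ = d`, which is (1).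
Conversely, every admissible `(s, t, λ, μ)` arises in this way from the concatenation of `λ s`
and `μ t`.
-/

open Function

namespace IsOrliczFunction

variable {φ : ℝ → ℝ}

lemma nonneg (hφ : IsOrliczFunction φ) {t : ℝ} (ht : 0 ≤ t) : 0 ≤ φ t :=
  hφ.map_zero ▸ hφ.strictMonoOn.monotoneOn (mem_Ici.2 le_rfl) ht ht

lemma orliczInv_apply (hφ : IsOrliczFunction φ) {t : ℝ} (ht : 0 ≤ t) :
    orliczInv φ (φ t) = t := by
  refine le_antisymm (csInf_le ⟨0, fun s hs => hs.1⟩ ⟨ht, le_rfl⟩) ?_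
  refine le_csInf ⟨t, ht, le_rfl⟩ fun s ⟨hs, hφs⟩ => ?_
  exact (hφ.strictMonoOn.le_iff_le ht hs).1 hφs

lemma exists_apply_eq (hφ : IsOrliczFunction φ) {y : ℝ} (hy : 0 ≤ y) :
    ∃ t, 0 ≤ t ∧ φ t = y := by
  obtain ⟨T, hyT, hT⟩ :=
    ((hφ.tendsto_atTop.eventually_ge_atTop y).and (eventually_ge_atTop 0)).exists
  obtain ⟨t, ht, rfl⟩ := intermediate_value_Icc hT (hφ.continuousOn.mono Icc_subset_Ici_self)
    ⟨by rwa [hφ.map_zero], hyT⟩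
  exact ⟨t, ht.1, rfl⟩

lemma apply_orliczInv (hφ : IsOrliczFunction φ) {y : ℝ} (hy : 0 ≤ y) :
    φ (orliczInv φ y) = y := by
  obtain ⟨t, ht, rfl⟩ := hφ.exists_apply_eq hy
  rw [hφ.orliczInv_apply ht]

lemma orliczInv_pos (hφ : IsOrliczFunction φ) {y : ℝ} (hy : 0 < y) : 0 < orliczInv φ y := by
  obtain ⟨t, ht, rfl⟩ := hφ.exists_apply_eq hy.le
  rw [hφ.orliczInv_apply ht]
  exact ht.lt_of_ne (by rintro rfl; exact hy.ne' hφ.map_zero)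

end IsOrliczFunction

noncomputable def orliczModular (φ : ℝ → ℝ) (x : ℕ → ℝ) (c : ℝ) : ℝ :=
  ∑' n, φ (|x n| / c)

section Modular

variable {φ : ℝ → ℝ} {x : ℕ → ℝ}

lemma orliczModular_eq_sum (hφ0 : φ 0 = 0) {F : Finset ℕ} (hF : support x ⊆ F) (c : ℝ) :
    orliczModular φ x c = ∑ i ∈ F, φ (|x i| / c) :=
  tsum_eq_sum fun i hi => by simp [notMem_support.1 fun h => hi (hF h), hφ0]

lemma orliczModular_eq_sum_fin (hφ0 : φ 0 = 0) {N : ℕ} (hx : ∀ i, N ≤ i → x i = 0) (c : ℝ) :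
    orliczModular φ x c = ∑ i : Fin N, φ (|x i| / c) := by
  rw [Fin.sum_univ_eq_sum_range (fun i => φ (|x i| / c))]
  refine orliczModular_eq_sum hφ0 (fun i hi => ?_) c
  simpa using not_le.1 (mt (hx i) hi)

lemma orliczModular_eq_sum_add_sum (hφ0 : φ 0 = 0) {n m : ℕ} (hx : ∀ i, n + m ≤ i → x i = 0)
    (c : ℝ) :
    orliczModular φ x c = ∑ i : Fin n, φ (|x i| / c) + ∑ j : Fin m, φ (|x (n + j)| / c) := by
  rw [orliczModular_eq_sum_fin hφ0 hx, Fin.sum_univ_add]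
  simp

lemma orliczModular_projSeq (hφ0 : φ 0 = 0) (n : ℕ) (c : ℝ) :
    orliczModular φ (projSeq n x) c = ∑ i : Fin n, φ (|x i| / c) := by
  rw [orliczModular_eq_sum_fin hφ0 (x := projSeq n x) (N := n) fun i hi => if_neg (not_lt.2 hi)]
  simp [projSeq]

lemma orliczModular_sub_projSeq (hφ0 : φ 0 = 0) {n m : ℕ} (hx : ∀ i, n + m ≤ i → x i = 0)
    (c : ℝ) : orliczModular φ (x - projSeq n x) c = ∑ j : Fin m, φ (|x (n + j)| / c) := by
  have hxP : ∀ i, n + m ≤ i → (x - projSeq n x) i = 0 := fun i hi => by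
    simp [projSeq, hx i hi]
  rw [orliczModular_eq_sum_add_sum hφ0 hxP]
  simp [projSeq, hφ0]

lemma ofReal_orliczModular (hφ : IsOrliczFunction φ) (hx : (support x).Finite) {c : ℝ}
    (hc : 0 < c) :
    ENNReal.ofReal (orliczModular φ x c) = ∑' n, ENNReal.ofReal (φ (|x n| / c)) :=
  ENNReal.ofReal_tsum_of_nonneg (fun n => hφ.nonneg (by positivity))
    (summable_of_hasFiniteSupport <| hx.subset <|
      support_comp_subset (g := fun a => φ (|a| / c)) (by simp [hφ.map_zero]) x)

lemma strictAntiOn_orliczModular (hφ : IsOrliczFunction φ) (hx : (support x).Finite)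
    (hx0 : x ≠ 0) : StrictAntiOn (orliczModular φ x) (Ioi 0) := by
  intro a ha b hb hab
  obtain ⟨i, hi⟩ : ∃ i, x i ≠ 0 := by by_contra! h; exact hx0 (funext h)
  have hF : support x ⊆ hx.toFinset := by simp
  have hmem : ∀ {c : ℝ}, 0 < c → ∀ i, |x i| / c ∈ Ici 0 := fun hc i =>
    div_nonneg (abs_nonneg _) hc.le
  have hmono : ∀ i, φ (|x i| / b) ≤ φ (|x i| / a) := fun i =>
    hφ.strictMonoOn.monotoneOn (hmem hb i) (hmem ha i)
      (div_le_div_of_nonneg_left (abs_nonneg _) ha hab.le)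
  rw [orliczModular_eq_sum hφ.map_zero hF, orliczModular_eq_sum hφ.map_zero hF]
  refine Finset.sum_lt_sum (fun i _ => hmono i) ⟨i, by simpa using hi, ?_⟩
  exact hφ.strictMonoOn (hmem hb i) (hmem ha i) (div_lt_div_of_pos_left (abs_pos.2 hi) ha hab)

lemma exists_orliczModular_eq_one (hφ : IsOrliczFunction φ) (hx : (support x).Finite)
    (hx0 : x ≠ 0) : ∃ c, 0 < c ∧ orliczModular φ x c = 1 := by
  obtain ⟨i, hi⟩ : ∃ i, x i ≠ 0 := by by_contra! h; exact hx0 (funext h)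
  set F := hx.toFinset
  -- in the variable `r = 1 / c` the modular is continuous on `[0, ∞)` and vanishes at `0`
  set f : ℝ → ℝ := fun r => ∑ j ∈ F, φ (r * |x j|)
  have hf : ∀ r, orliczModular φ x r⁻¹ = f r := fun r => by
    rw [orliczModular_eq_sum hφ.map_zero (F := F) (by simp [F])]
    simp [f, mul_comm]
  have hcont : ContinuousOn f (Ici 0) :=
    continuousOn_finsetSum F fun j _ => hφ.continuousOn.comp (by fun_prop)
      fun r hr => mem_Ici.2 (mul_nonneg hr (abs_nonneg _))
  have hgrow : Tendsto f atTop atTop := by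
    refine tendsto_atTop_mono' _ ?_ <|
      hφ.tendsto_atTop.comp (tendsto_id.atTop_mul_const (abs_pos.2 hi))
    filter_upwards [eventually_ge_atTop 0] with r hr
    exact Finset.single_le_sum (f := fun j => φ (r * |x j|))
      (fun j _ => hφ.nonneg (mul_nonneg hr (abs_nonneg _))) (by simpa [F] using hi)
  obtain ⟨R, hR1, hR⟩ := ((hgrow.eventually_ge_atTop 1).and (eventually_ge_atTop 0)).exists
  have hf0 : f 0 = 0 := by simp [f, hφ.map_zero]
  obtain ⟨r, hr, hfr⟩ := intermediate_value_Icc hR (hcont.mono Icc_subset_Ici_self)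
    ⟨by rw [hf0]; exact zero_le_one, hR1⟩
  have hr0 : 0 < r := hr.1.lt_of_ne (by rintro rfl; simp [hf0] at hfr)
  exact ⟨r⁻¹, inv_pos.2 hr0, (hf r).trans hfr⟩

end Modular

section LuxNorm

variable {φ : ℝ → ℝ} {x : ℕ → ℝ}

lemma luxNorm_nonneg (φ : ℝ → ℝ) (x : ℕ → ℝ) : 0 ≤ luxNorm φ x :=
  Real.sInf_nonneg fun _ hl => hl.1.le

lemma luxNorm_zero (hφ0 : φ 0 = 0) : luxNorm φ 0 = 0 := by
  have : {l : ℝ | 0 < l ∧ ∑' n, ENNReal.ofReal (φ (|(0 : ℕ → ℝ) n| / l)) ≤ 1} = Ioi 0 := by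
    ext l
    simp [hφ0]
  rw [luxNorm, this, csInf_Ioi]

lemma luxNorm_eq_of_orliczModular_eq_one (hφ : IsOrliczFunction φ) (hx : (support x).Finite)
    {c : ℝ} (hc : 0 < c) (h : orliczModular φ x c = 1) : luxNorm φ x = c := by
  have hx0 : x ≠ 0 := by
    rintro rfl
    simp [orliczModular, hφ.map_zero] at h
  refine IsLeast.csInf_eq ⟨⟨hc, ?_⟩, fun l ⟨hl, hle⟩ => ?_⟩
  · rw [← ofReal_orliczModular hφ hx hc, h, ENNReal.ofReal_one]
  · rw [← ofReal_orliczModular hφ hx hl, ENNReal.ofReal_le_one] at hle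
    by_contra! hlc
    exact (strictAntiOn_orliczModular hφ hx hx0 hl hc hlc).not_ge (h ▸ hle)

lemma luxNorm_pos_and_orliczModular_eq_one (hφ : IsOrliczFunction φ)
    (hx : (support x).Finite) (hx0 : x ≠ 0) :
    0 < luxNorm φ x ∧ orliczModular φ x (luxNorm φ x) = 1 := by
  obtain ⟨c, hc, h⟩ := exists_orliczModular_eq_one hφ hx hx0
  rw [luxNorm_eq_of_orliczModular_eq_one hφ hx hc h]
  exact ⟨hc, h⟩

lemma luxNorm_eq_iff_orliczModular_eq_one (hφ : IsOrliczFunction φ) (hx : (support x).Finite)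
    {c : ℝ} (hc : 0 < c) : luxNorm φ x = c ↔ orliczModular φ x c = 1 := by
  refine ⟨fun h => ?_, luxNorm_eq_of_orliczModular_eq_one hφ hx hc⟩
  have hx0 : x ≠ 0 := by
    rintro rfl
    exact hc.ne' (h ▸ luxNorm_zero hφ.map_zero)
  exact h ▸ (luxNorm_pos_and_orliczModular_eq_one hφ hx hx0).2

lemma eq_apply_luxNorm_iff (hφ : IsOrliczFunction φ) (hx : (support x).Finite) {y : ℝ}
    (hy : 0 < y) : y = φ (luxNorm φ x) ↔ orliczModular φ x (orliczInv φ y) = 1 := by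
  have hd := hφ.orliczInv_pos hy
  rw [← luxNorm_eq_iff_orliczModular_eq_one hφ hx hd, eq_comm]
  conv_lhs => rw [← hφ.apply_orliczInv hy.le]
  exact hφ.strictMonoOn.injOn.eq_iff (luxNorm_nonneg φ x) hd.le

end LuxNorm

lemma support_projSeq_subset (n : ℕ) (x : ℕ → ℝ) : support (projSeq n x) ⊆ support x :=
  support_subset_iff'.2 fun i hi => by simp [projSeq, notMem_support.1 hi]

lemma support_sub_projSeq_subset (n : ℕ) (x : ℕ → ℝ) :
    support (x - projSeq n x) ⊆ support x :=
  support_subset_iff'.2 fun i hi => by simp [projSeq, notMem_support.1 hi]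

def finAppendSeq {k l : ℕ} (a : Fin k → ℝ) (b : Fin l → ℝ) (i : ℕ) : ℝ :=
  if h : i < k + l then Fin.append a b ⟨i, h⟩ else 0

section FinAppendSeq

variable {φ : ℝ → ℝ} {k l : ℕ} (a : Fin k → ℝ) (b : Fin l → ℝ)

lemma finAppendSeq_left (i : Fin k) : finAppendSeq a b i = a i :=
  (dif_pos (i.isLt.trans_le (Nat.le_add_right k l))).trans (Fin.append_left a b i)

lemma finAppendSeq_right (j : Fin l) : finAppendSeq a b (k + j) = b j :=
  (dif_pos (Nat.add_lt_add_left j.isLt k)).trans (Fin.append_right a b j)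

lemma finAppendSeq_eq_zero {i : ℕ} (hi : k + l ≤ i) : finAppendSeq a b i = 0 :=
  dif_neg (not_lt.2 hi)

lemma finite_support_finAppendSeq : (support (finAppendSeq a b)).Finite :=
  (finite_Iio (k + l)).subset fun _ hi => not_le.1 (mt (finAppendSeq_eq_zero a b) hi)

lemma orliczModular_finAppendSeq (hφ0 : φ 0 = 0) (c : ℝ) :
    orliczModular φ (finAppendSeq a b) c = ∑ i, φ (|a i| / c) + ∑ j, φ (|b j| / c) := by
  simp [orliczModular_eq_sum_add_sum hφ0 (fun _ => finAppendSeq_eq_zero a b),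
    finAppendSeq_left, finAppendSeq_right]

lemma luxNorm_projSeq_finAppendSeq (hφ : IsOrliczFunction φ) {s : Fin k → ℝ}
    (hs : ∀ i, 0 ≤ s i) (hs1 : ∑ i, φ (s i) = 1) {lam : ℝ} (hlam : 0 < lam) :
    luxNorm φ (projSeq k (finAppendSeq (lam • s) b)) = lam := by
  refine luxNorm_eq_of_orliczModular_eq_one hφ
    ((finite_support_finAppendSeq _ b).subset (support_projSeq_subset k _)) hlam ?_
  simp [orliczModular_projSeq hφ.map_zero, finAppendSeq_left, abs_mul, abs_of_pos hlam,
    abs_of_nonneg (hs _), hlam.ne', hs1]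

lemma luxNorm_sub_projSeq_finAppendSeq (hφ : IsOrliczFunction φ) {t : Fin l → ℝ}
    (ht : ∀ j, 0 ≤ t j) (ht1 : ∑ j, φ (t j) = 1) {mu : ℝ} (hmu : 0 < mu) :
    luxNorm φ (finAppendSeq a (mu • t) - projSeq k (finAppendSeq a (mu • t))) = mu := by
  refine luxNorm_eq_of_orliczModular_eq_one hφ
    ((finite_support_finAppendSeq a _).subset (support_sub_projSeq_subset k _)) hmu ?_
  simp [orliczModular_sub_projSeq hφ.map_zero (fun _ => finAppendSeq_eq_zero a (mu • t)),
    finAppendSeq_right, abs_mul, abs_of_pos hmu, abs_of_nonneg (ht _), hmu.ne', ht1]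

end FinAppendSeq

/-- for a non-degenerate Orlicz function `φ`, the norm identity (1)
for finitely supported sequences is equivalent to the combinatorial condition (2). -/
theorem orlicz_luxNorm_eq_iff_star (φ : ℝ → ℝ) (hφ : IsOrliczFunction φ) :
    -- (1)
    (∀ x : ℕ → ℝ, (Function.support x).Finite → ∀ n : ℕ,
      φ (luxNorm φ (projSeq n x)) + φ (luxNorm φ (x - projSeq n x)) =
        φ (luxNorm φ x)) ↔
    -- (2)
    (∀ (k l : ℕ) (s : Fin k → ℝ) (t : Fin l → ℝ),
      (∀ i, 0 ≤ s i) → (∀ j, 0 ≤ t j) →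
      (∑ i, φ (s i)) = 1 → (∑ j, φ (t j)) = 1 →
      ∀ lam mu : ℝ, 0 < lam → 0 < mu →
        (∑ i, φ (lam * s i / orliczInv φ (φ lam + φ mu))) +
          (∑ j, φ (mu * t j / orliczInv φ (φ lam + φ mu))) = 1) := by
  have hsum_pos : ∀ {a b : ℝ}, 0 < a → 0 < b → 0 < φ a + φ b := fun ha hb =>
    add_pos (hφ.pos _ ha) (hφ.pos _ hb)
  constructor
  · intro H k l s t hs ht hs1 ht1 lam mu hlam hmu
    set x := finAppendSeq (lam • s) (mu • t)
    have hfin := finite_support_finAppendSeq (lam • s) (mu • t)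
    have hsplit := H x hfin k
    rw [luxNorm_projSeq_finAppendSeq _ hφ hs hs1 hlam,
      luxNorm_sub_projSeq_finAppendSeq _ hφ ht ht1 hmu] at hsplit
    have h := (eq_apply_luxNorm_iff hφ hfin (hsum_pos hlam hmu)).1 hsplit
    rw [orliczModular_finAppendSeq _ _ hφ.map_zero] at h
    simpa [abs_mul, abs_of_pos hlam, abs_of_pos hmu, abs_of_nonneg (hs _),
      abs_of_nonneg (ht _)] using h
  · intro H x hx n
    by_cases hP0 : projSeq n x = 0
    · simp [hP0, luxNorm_zero hφ.map_zero, hφ.map_zero]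
    by_cases hQ0 : x - projSeq n x = 0
    · rw [hQ0, luxNorm_zero hφ.map_zero, hφ.map_zero, add_zero, ← sub_eq_zero.1 hQ0]
    obtain ⟨B, hB⟩ := hx.bddAbove
    have hxm : ∀ i, n + (B + 1) ≤ i → x i = 0 := fun i hi =>
      notMem_support.1 fun h => by have := hB h; omega
    obtain ⟨hlam, hlam1⟩ := luxNorm_pos_and_orliczModular_eq_one hφ
      (hx.subset (support_projSeq_subset n x)) hP0
    obtain ⟨hmu, hmu1⟩ := luxNorm_pos_and_orliczModular_eq_one hφ
      (hx.subset (support_sub_projSeq_subset n x)) hQ0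
    rw [orliczModular_projSeq hφ.map_zero] at hlam1
    rw [orliczModular_sub_projSeq hφ.map_zero hxm] at hmu1
    refine (eq_apply_luxNorm_iff hφ hx (hsum_pos hlam hmu)).2 ?_
    rw [orliczModular_eq_sum_add_sum hφ.map_zero hxm]
    simpa only [mul_div_cancel₀ _ hlam.ne', mul_div_cancel₀ _ hmu.ne'] using
      H n (B + 1) _ _ (fun i => by positivity) (fun j => by positivity) hlam1 hmu1 _ _ hlam hmu
end

section
/- Let φ be a non-degenerate Orlicz function. If there exists a function β : (0,∞) → (0,∞) such that φ(ks) = β(k)·φ(s) for all k, s ∈ (0,∞), then there exists q ∈ [1,∞) such that φ(t) = φ(1)·t^q for all t ∈ [0,∞). -/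
open Metric Set Filter
open scoped NNReal ENNReal

/-- a non-degenerate Orlicz function satisfying
`φ(ks) = β(k)·φ(s)` for all `k, s > 0` is a power function `φ(t) = φ(1)·t^q`
with `q ∈ [1,∞)`. -/
theorem orlicz_eq_power_of_multiplicative (φ : ℝ → ℝ) (hφ : IsOrliczFunction φ)
    (β : ℝ → ℝ) (hβpos : ∀ k : ℝ, 0 < k → 0 < β k)
    (hβ : ∀ k s : ℝ, 0 < k → 0 < s → φ (k * s) = β k * φ s) :
    ∃ q : ℝ, 1 ≤ q ∧ ∀ t : ℝ, 0 ≤ t → φ t = φ 1 * t ^ q := by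
  have hφ1 : 0 < φ 1 := hφ.pos 1 one_pos
  -- g is multiplicative
  set g : ℝ → ℝ := fun t => φ t / φ 1 with hg
  have hgpos : ∀ t : ℝ, 0 < t → 0 < g t := fun t ht => div_pos (hφ.pos t ht) hφ1
  have hβval : ∀ k : ℝ, 0 < k → β k = φ k / φ 1 := by
    intro k hk
    have := hβ k 1 hk one_pos
    rw [mul_one] at this
    field_simp [this]
    exact this.symm
  have hgmul : ∀ k s : ℝ, 0 < k → 0 < s → g (k * s) = g k * g s := by
    intro k s hk hs
    simp only [hg]
    rw [hβ k s hk hs, hβval k hk]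
    field_simp
  -- additive map h
  set h : ℝ → ℝ := fun x => Real.log (g (Real.exp x)) with hh
  have hadd : ∀ x y : ℝ, h (x + y) = h x + h y := by
    intro x y
    simp only [hh, Real.exp_add]
    rw [hgmul _ _ (Real.exp_pos x) (Real.exp_pos y),
      Real.log_mul (ne_of_gt (hgpos _ (Real.exp_pos x))) (ne_of_gt (hgpos _ (Real.exp_pos y)))]
  have hcont : Continuous h := by
    have hc1 : Continuous fun x : ℝ => φ (Real.exp x) :=
      ContinuousOn.comp_continuous (hφ.continuousOn) Real.continuous_exp
        (fun x => le_of_lt (Real.exp_pos x))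
    have hc2 : Continuous fun x : ℝ => g (Real.exp x) := hc1.div_const _
    exact hc2.log (fun x => ne_of_gt (hgpos _ (Real.exp_pos x)))
  set H : ℝ →+ ℝ := AddMonoidHom.mk' h hadd with hH
  have hcoe : ∀ x : ℝ, (H.toRealLinearMap hcont) x = h x := fun x =>
    congrFun (AddMonoidHom.coe_toRealLinearMap H hcont) x
  have hlinval : ∀ x : ℝ, h x = x * h 1 := by
    intro x
    rw [← hcoe x, ← hcoe 1]
    have e : (H.toRealLinearMap hcont) x = (H.toRealLinearMap hcont) (x • (1:ℝ)) := by
      norm_num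
    rw [e, map_smul, smul_eq_mul]
  set q : ℝ := h 1 with hq
  -- g t = t ^ q for t > 0
  have hgval : ∀ t : ℝ, 0 < t → g t = t ^ q := by
    intro t ht
    have h1 : h (Real.log t) = Real.log t * q := hlinval _
    have h2 : g (Real.exp (Real.log t)) = g t := by rw [Real.exp_log ht]
    have h3 : Real.log (g t) = Real.log t * q := by
      rw [← h2]; exact h1
    have := congrArg Real.exp h3
    rw [Real.exp_log (hgpos t ht)] at this
    rw [this, Real.rpow_def_of_pos ht, mul_comm]
  -- q ≥ 1 from convexity
  have hhalf : φ (1/2 : ℝ) ≤ φ 1 / 2 := by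
    have := hφ.convexOn.2 (show (0:ℝ) ∈ Ici (0:ℝ) by norm_num)
      (show (1:ℝ) ∈ Ici (0:ℝ) by norm_num) (by norm_num : (0:ℝ) ≤ 1/2)
      (by norm_num : (0:ℝ) ≤ 1/2) (by norm_num : (1:ℝ)/2 + 1/2 = 1)
    simp only [smul_eq_mul, mul_zero, zero_add, mul_one, hφ.map_zero] at this
    calc φ (1/2 : ℝ) = φ ((1:ℝ)/2 * 0 + 1/2 * 1) := by norm_num
      _ ≤ 1/2 * φ 0 + 1/2 * φ 1 := hφ.convexOn.2 (by norm_num) (by norm_num)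
          (by norm_num) (by norm_num) (by norm_num)
      _ = φ 1 / 2 := by rw [hφ.map_zero]; ring
  have hq1 : 1 ≤ q := by
    have hghalf : g (1/2 : ℝ) = (1/2 : ℝ) ^ q := hgval _ (by norm_num)
    have hle : ((1:ℝ)/2) ^ q ≤ 1/2 := by
      rw [← hghalf, hg]
      rw [div_le_iff₀ hφ1]
      calc φ (1/2 : ℝ) ≤ φ 1 / 2 := hhalf
        _ = 1/2 * φ 1 := by ring
    have hlog := Real.log_le_log (Real.rpow_pos_of_pos (by norm_num) q) hle
    rw [Real.log_rpow (by norm_num : (0:ℝ) < 1/2)] at hlog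
    have hneg : Real.log (1/2 : ℝ) < 0 := Real.log_neg (by norm_num) (by norm_num)
    nlinarith
  refine ⟨q, hq1, fun t ht => ?_⟩
  rcases eq_or_lt_of_le ht with rfl | ht
  · rw [hφ.map_zero, Real.zero_rpow (by linarith : q ≠ 0), mul_zero]
  · have := hgval t ht
    rw [hg] at this
    field_simp at this
    linarith [this]
end

section
/- Let A ≥ 0 and B > 0 and consider the non-degenerate Orlicz function M_{A,B}(t) = A t⁴ + B t². Then for every x ∈ ℓ_{M_{A,B}}, the Luxemburg norm is given explicitly by ‖x‖_{M_{A,B}} = √( ( B‖x‖₂² + √( B²‖x‖₂⁴ + 4A‖x‖₄⁴ ) ) / 2 ), and it satisfies √B · ‖x‖₂ ≤ ‖x‖_{M_{A,B}} ≤ √( (B + √(B² + 4A)) / 2 ) · ‖x‖₂, where ‖·‖₂ and ‖·‖₄ are the ℓ₂ and ℓ₄ norms. -/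
open Metric Set Filter
open scoped NNReal ENNReal

private theorem luxNorm_qq_summable (A B : ℝ) (hA : 0 ≤ A) (hB : 0 < B)
    (x : ℕ → ℝ) (hx : MemOrlicz (fun t => A * t ^ 4 + B * t ^ 2) x) :
    Summable (fun n => x n ^ 2) ∧ Summable (fun n => x n ^ 4) := by
  obtain ⟨l₀, hl₀, hfin⟩ := hx
  have hmono : ∀ n, ENNReal.ofReal (B / l₀ ^ 2 * x n ^ 2)
      ≤ ENNReal.ofReal (A * (|x n| / l₀) ^ 4 + B * (|x n| / l₀) ^ 2) := by
    intro n
    apply ENNReal.ofReal_le_ofReal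
    have h1 : (|x n| / l₀) ^ 2 = x n ^ 2 / l₀ ^ 2 := by rw [div_pow, sq_abs]
    have h2 : (0:ℝ) ≤ A * (|x n| / l₀) ^ 4 := by positivity
    rw [h1]
    have h3 : B / l₀ ^ 2 * x n ^ 2 = B * (x n ^ 2 / l₀ ^ 2) := by ring
    linarith
  have h2fin : (∑' n, ENNReal.ofReal (B / l₀ ^ 2 * x n ^ 2)) < ⊤ :=
    lt_of_le_of_lt (ENNReal.tsum_le_tsum hmono) hfin
  have h2 : Summable (fun n => B / l₀ ^ 2 * x n ^ 2) := by
    have := ENNReal.summable_toReal h2fin.ne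
    refine this.congr fun n => ?_
    rw [ENNReal.toReal_ofReal (by positivity)]
  have hS2 : Summable (fun n => x n ^ 2) := by
    have := h2.mul_left (l₀ ^ 2 / B)
    refine this.congr fun n => ?_
    field_simp
  refine ⟨hS2, ?_⟩
  refine Summable.of_nonneg_of_le (fun n => by positivity)
    (fun n => ?_) (hS2.mul_left (∑' n, x n ^ 2))
  have h := Summable.le_tsum hS2 n fun j _ => sq_nonneg (x j)
  nlinarith [sq_nonneg (x n)]

private theorem luxNorm_qq_S4_le (x : ℕ → ℝ) (hS2 : Summable (fun n => x n ^ 2))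
    (hS4 : Summable (fun n => x n ^ 4)) :
    (∑' n, x n ^ 4) ≤ (∑' n, x n ^ 2) ^ 2 := by
  have h := fun n => Summable.le_tsum hS2 n fun j _ => sq_nonneg (x j)
  have : (∑' n, x n ^ 4) ≤ ∑' n, (∑' m, x m ^ 2) * x n ^ 2 := by
    refine Summable.tsum_le_tsum (fun n => ?_) hS4 (hS2.mul_left _)
    nlinarith [sq_nonneg (x n), h n]
  rwa [tsum_mul_left, ← sq] at this

private theorem luxNorm_qq_core (A B : ℝ) (hA : 0 ≤ A) (hB : 0 < B)
    (x : ℕ → ℝ)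
    (hS2 : Summable (fun n => x n ^ 2)) (hS4 : Summable (fun n => x n ^ 4)) :
    sInf {l : ℝ | 0 < l ∧ ∑' n, ENNReal.ofReal (A * (|x n| / l) ^ 4 + B * (|x n| / l) ^ 2) ≤ 1}
      = Real.sqrt ((B * (∑' n, x n ^ 2) +
        Real.sqrt (B ^ 2 * (∑' n, x n ^ 2) ^ 2 + 4 * A * (∑' n, x n ^ 4))) / 2) := by
  set S2 := ∑' n, x n ^ 2 with hS2def
  set S4 := ∑' n, x n ^ 4 with hS4def
  have hS2nn : 0 ≤ S2 := tsum_nonneg fun n => sq_nonneg _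
  have hS4nn : 0 ≤ S4 := tsum_nonneg fun n => by positivity
  set D := Real.sqrt (B ^ 2 * S2 ^ 2 + 4 * A * S4) with hDdef
  set c := Real.sqrt ((B * S2 + D) / 2) with hcdef
  have hDnn : 0 ≤ D := Real.sqrt_nonneg _
  have hD2 : D ^ 2 = B ^ 2 * S2 ^ 2 + 4 * A * S4 := Real.sq_sqrt (by positivity)
  have hDge : B * S2 ≤ D := by
    have h1 : Real.sqrt ((B * S2) ^ 2) ≤ D :=
      Real.sqrt_le_sqrt (by nlinarith)
    rwa [Real.sqrt_sq (by positivity)] at h1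
  have hcnn : 0 ≤ c := Real.sqrt_nonneg _
  have hc2 : c ^ 2 = (B * S2 + D) / 2 := Real.sq_sqrt (by positivity)
  have hsum : ∀ l : ℝ, 0 < l →
      (∑' n, ENNReal.ofReal (A * (|x n| / l) ^ 4 + B * (|x n| / l) ^ 2))
        = ENNReal.ofReal (A * S4 / l ^ 4 + B * S2 / l ^ 2) := by
    intro l hl
    have hterm : ∀ n, A * (|x n| / l) ^ 4 + B * (|x n| / l) ^ 2
        = (A / l ^ 4) * x n ^ 4 + (B / l ^ 2) * x n ^ 2 := by
      intro n
      have habs : |x n| ^ 4 = x n ^ 4 := by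
        rw [← abs_pow]; exact abs_of_nonneg (by positivity)
      rw [div_pow, div_pow, sq_abs, habs]; ring
    have hsumm : Summable (fun n => (A / l ^ 4) * x n ^ 4 + (B / l ^ 2) * x n ^ 2) :=
      (hS4.mul_left _).add (hS2.mul_left _)
    calc (∑' n, ENNReal.ofReal (A * (|x n| / l) ^ 4 + B * (|x n| / l) ^ 2))
        = ∑' n, ENNReal.ofReal ((A / l ^ 4) * x n ^ 4 + (B / l ^ 2) * x n ^ 2) := by
          simp only [hterm]
      _ = ENNReal.ofReal (∑' n, ((A / l ^ 4) * x n ^ 4 + (B / l ^ 2) * x n ^ 2)) :=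
          (ENNReal.ofReal_tsum_of_nonneg (fun n => by positivity) hsumm).symm
      _ = ENNReal.ofReal (A * S4 / l ^ 4 + B * S2 / l ^ 2) := by
          rw [Summable.tsum_add (hS4.mul_left _) (hS2.mul_left _), tsum_mul_left, tsum_mul_left,
            ← hS2def, ← hS4def]
          ring_nf
  have hset : {l : ℝ | 0 < l ∧ ∑' n, ENNReal.ofReal (A * (|x n| / l) ^ 4 + B * (|x n| / l) ^ 2) ≤ 1}
      = {l : ℝ | 0 < l ∧ c ≤ l} := by
    ext l
    simp only [mem_setOf_eq]
    constructor
    · rintro ⟨hl, hle⟩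
      refine ⟨hl, ?_⟩
      rw [hsum l hl, ENNReal.ofReal_le_one] at hle
      have hl4 : (0:ℝ) < l ^ 4 := by positivity
      have key : (A * S4 / l ^ 4 + B * S2 / l ^ 2) * l ^ 4 = A * S4 + B * S2 * l ^ 2 := by
        field_simp
      have h4 : A * S4 + B * S2 * l ^ 2 ≤ l ^ 4 := by
        nlinarith [mul_le_mul_of_nonneg_right hle hl4.le]
      have hfac : 0 < 2 * l ^ 2 - (B * S2 - D) := by nlinarith [sq_nonneg l]
      have hu : c ^ 2 ≤ l ^ 2 := by nlinarith
      have := Real.sqrt_le_sqrt hu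
      rwa [Real.sqrt_sq hcnn, Real.sqrt_sq hl.le] at this
    · rintro ⟨hl, hcl⟩
      refine ⟨hl, ?_⟩
      rw [hsum l hl, ENNReal.ofReal_le_one]
      have hl2 : c ^ 2 ≤ l ^ 2 := by nlinarith
      have h4 : A * S4 + B * S2 * l ^ 2 ≤ l ^ 4 := by
        nlinarith [mul_nonneg (by nlinarith : (0:ℝ) ≤ l ^ 2 - (B * S2 + D) / 2)
          (by nlinarith : (0:ℝ) ≤ l ^ 2 - (B * S2 - D) / 2)]
      have heq : A * S4 / l ^ 4 + B * S2 / l ^ 2 = (A * S4 + B * S2 * l ^ 2) / l ^ 4 := by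
        field_simp
      rw [heq, div_le_one (by positivity)]
      exact h4
  rw [hset]
  rcases eq_or_lt_of_le hcnn with hc0 | hc0
  · have : {l : ℝ | 0 < l ∧ c ≤ l} = Ioi (0:ℝ) := by
      ext l; simp only [mem_setOf_eq, mem_Ioi]
      exact ⟨fun h => h.1, fun h => ⟨h, hc0 ▸ h.le⟩⟩
    rw [this, csInf_Ioi, hc0]
  · have : {l : ℝ | 0 < l ∧ c ≤ l} = Ici c := by
      ext l; simp only [mem_setOf_eq, mem_Ici]
      exact ⟨fun h => h.2, fun h => ⟨lt_of_lt_of_le hc0 h, h⟩⟩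
    rw [this, csInf_Ici]

/-- Example: for the Orlicz function `M_{A,B}(t) = At⁴ + Bt²`
(`A ≥ 0`, `B > 0`), the Luxemburg norm of any `x ∈ ℓ_{M_{A,B}}` is given by the
explicit formula in terms of the `ℓ₂`- and `ℓ₄`-norms of `x`, and is equivalent
to the `ℓ₂`-norm with constants `√B` and `√((B + √(B² + 4A))/2)`. -/
theorem luxNorm_quartic_quadratic (A B : ℝ) (hA : 0 ≤ A) (hB : 0 < B)
    (x : ℕ → ℝ) (hx : MemOrlicz (fun t => A * t ^ 4 + B * t ^ 2) x) :
    luxNorm (fun t => A * t ^ 4 + B * t ^ 2) x =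
      Real.sqrt ((B * (Real.sqrt (∑' n, x n ^ 2)) ^ 2 +
        Real.sqrt (B ^ 2 * (Real.sqrt (∑' n, x n ^ 2)) ^ 4 +
          4 * A * (((∑' n, x n ^ 4) ^ ((1 : ℝ) / 4)) ^ 4))) / 2) ∧
    Real.sqrt B * Real.sqrt (∑' n, x n ^ 2) ≤
      luxNorm (fun t => A * t ^ 4 + B * t ^ 2) x ∧
    luxNorm (fun t => A * t ^ 4 + B * t ^ 2) x ≤
      Real.sqrt ((B + Real.sqrt (B ^ 2 + 4 * A)) / 2) * Real.sqrt (∑' n, x n ^ 2) := by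
  obtain ⟨hS2, hS4⟩ := luxNorm_qq_summable A B hA hB x hx
  have hcore : luxNorm (fun t => A * t ^ 4 + B * t ^ 2) x
      = Real.sqrt ((B * (∑' n, x n ^ 2) +
        Real.sqrt (B ^ 2 * (∑' n, x n ^ 2) ^ 2 + 4 * A * (∑' n, x n ^ 4))) / 2) :=
    luxNorm_qq_core A B hA hB x hS2 hS4
  set S2 := ∑' n, x n ^ 2 with hS2def
  set S4 := ∑' n, x n ^ 4 with hS4def
  have hS2nn : 0 ≤ S2 := tsum_nonneg fun n => sq_nonneg _
  have hS4nn : 0 ≤ S4 := tsum_nonneg fun n => by positivity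
  have hsq2 : (Real.sqrt S2) ^ 2 = S2 := Real.sq_sqrt hS2nn
  have hsq4 : (Real.sqrt S2) ^ 4 = S2 ^ 2 := by
    rw [show (4:ℕ) = 2*2 from rfl, pow_mul, hsq2]
  have hr4 : (S4 ^ ((1:ℝ)/4)) ^ (4:ℕ) = S4 := by
    rw [← Real.rpow_natCast (S4 ^ ((1:ℝ)/4)) 4, ← Real.rpow_mul hS4nn]
    norm_num
  rw [hcore, hsq2, hsq4, hr4]
  have hDge : B * S2 ≤ Real.sqrt (B ^ 2 * S2 ^ 2 + 4 * A * S4) := by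
    have h1 : Real.sqrt ((B * S2) ^ 2) ≤ Real.sqrt (B ^ 2 * S2 ^ 2 + 4 * A * S4) :=
      Real.sqrt_le_sqrt (by nlinarith)
    rwa [Real.sqrt_sq (by positivity)] at h1
  have hDnn : (0:ℝ) ≤ Real.sqrt (B ^ 2 * S2 ^ 2 + 4 * A * S4) := Real.sqrt_nonneg _
  refine ⟨rfl, ?_, ?_⟩
  · rw [← Real.sqrt_mul hB.le]
    apply Real.sqrt_le_sqrt
    linarith
  · have h54 : S4 ≤ S2 ^ 2 := luxNorm_qq_S4_le x hS2 hS4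
    have hE : Real.sqrt (B ^ 2 * S2 ^ 2 + 4 * A * S4) ≤ Real.sqrt (B ^ 2 + 4 * A) * S2 := by
      calc Real.sqrt (B ^ 2 * S2 ^ 2 + 4 * A * S4)
          ≤ Real.sqrt ((B ^ 2 + 4 * A) * S2 ^ 2) := Real.sqrt_le_sqrt (by nlinarith)
        _ = Real.sqrt (B ^ 2 + 4 * A) * Real.sqrt (S2 ^ 2) := Real.sqrt_mul (by positivity) _
        _ = Real.sqrt (B ^ 2 + 4 * A) * S2 := by rw [Real.sqrt_sq hS2nn]
    have hEnn : (0:ℝ) ≤ Real.sqrt (B ^ 2 + 4 * A) := Real.sqrt_nonneg _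
    rw [← Real.sqrt_mul (by positivity : (0:ℝ) ≤ (B + Real.sqrt (B ^ 2 + 4 * A)) / 2)]
    apply Real.sqrt_le_sqrt
    nlinarith [hE]
end

section
/- Let A ≥ 0, B > 0, M_{A,B}(t) = A t⁴ + B t², and let X = (ℓ_{M_{A,B}})*, so that X* = ℓ_{M_{A,B}} (the space ℓ_{M_{A,B}} being reflexive). Set C₁ = √B and C₂ = √((B + √(B² + 4A))/2). Then for every ε ∈ (0,2), R_X(ε) ≤ √( C₂²/C₁² − ε²/4 ) = √( (B + √(B² + 4A))/(2B) − ε²/4 ), and for every ε with 0 < ε < 2C₁/C₂, r_X(ε) ≥ √( C₁²/C₂² − ε²/4 ) = √( 2B/(B + √(B² + 4A)) − ε²/4 ). -/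
open Metric Set Filter NormedSpace
open scoped NNReal ENNReal Topology

/-- A subset of the dual of a normed space is weak*-open if it is open when viewed
in the weak* topology (i.e. its image under the canonical identification with the
weak dual is open). -/
def IsWeakStarOpen {X : Type*} [NormedAddCommGroup X] [NormedSpace ℝ X]
    (V : Set (StrongDual ℝ X)) : Prop :=
  IsOpen (StrongDual.toWeakDual '' V)

/-- A subset of the dual of a normed space is weak*-compact if it is compact in
the weak* topology. -/
def IsWeakStarCompact {X : Type*} [NormedAddCommGroup X] [NormedSpace ℝ X]
    (K : Set (StrongDual ℝ X)) : Prop :=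
  IsCompact (StrongDual.toWeakDual '' K)

/-- The ε-Szlenk derivation of a set `K` in the dual: the set of points of `K` all of
whose weak*-open neighbourhoods `V` satisfy `diam (K ∩ V) > ε` (norm diameter). -/
def szlenkDeriv {X : Type*} [NormedAddCommGroup X] [NormedSpace ℝ X]
    (ε : ℝ) (K : Set (StrongDual ℝ X)) : Set (StrongDual ℝ X) :=
  {x ∈ K | ∀ V : Set (StrongDual ℝ X), IsWeakStarOpen V → x ∈ V → ε < diam (K ∩ V)}

/-- The filter of tails of a directed set, used to express convergence of nets. -/
def netFilter {A : Type*} (le : A → A → Prop) : Filter A :=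
  ⨅ a, Filter.principal {b | le a b}


/-- `R_X(ε) = inf {R > 0 : s_ε B_{X*} ⊆ R·B_{X*}}`. -/
noncomputable def RX (X : Type*) [NormedAddCommGroup X] [NormedSpace ℝ X] (ε : ℝ) : ℝ :=
  sInf {R : ℝ | 0 < R ∧
    szlenkDeriv ε (closedBall (0 : StrongDual ℝ X) 1) ⊆ closedBall (0 : StrongDual ℝ X) R}

/-- `r_X(ε) = sup {r > 0 : r·B_{X*} ⊆ s_ε B_{X*}}`. -/
noncomputable def rX (X : Type*) [NormedAddCommGroup X] [NormedSpace ℝ X] (ε : ℝ) : ℝ :=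
  sSup {r : ℝ | 0 < r ∧
    closedBall (0 : StrongDual ℝ X) r ⊆ szlenkDeriv ε (closedBall (0 : StrongDual ℝ X) 1)}

section SzlenkAux
lemma aux_lux_le (M : ℝ → ℝ) (x : ℕ → ℝ) {l : ℝ} (hl : 0 < l)
    (h : ∑' n, ENNReal.ofReal (M (|x n| / l)) ≤ 1) : luxNorm M x ≤ l :=
  csInf_le ⟨0, fun _ hb => hb.1.le⟩ ⟨hl, h⟩

lemma aux_le_lux (M : ℝ → ℝ) (x : ℕ → ℝ) {c : ℝ}
    (hne : ∃ l : ℝ, 0 < l ∧ ∑' n, ENNReal.ofReal (M (|x n| / l)) ≤ 1)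
    (h : ∀ l : ℝ, 0 < l → (∑' n, ENNReal.ofReal (M (|x n| / l)) ≤ 1) → c ≤ l) :
    c ≤ luxNorm M x :=
  le_csInf ⟨hne.choose, hne.choose_spec⟩ fun l hl => h l hl.1 hl.2

lemma aux_M_mono {A B u v : ℝ} (hA : 0 ≤ A) (hB : 0 ≤ B) (hu : 0 ≤ u) (huv : u ≤ v) :
    A * u ^ 4 + B * u ^ 2 ≤ A * v ^ 4 + B * v ^ 2 := by
  have h2 : u ^ 2 ≤ v ^ 2 := by nlinarith
  have h4 : u ^ 4 ≤ v ^ 4 := by nlinarith [sq_nonneg u, sq_nonneg v]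
  nlinarith [mul_le_mul_of_nonneg_left h4 hA, mul_le_mul_of_nonneg_left h2 hB]

lemma aux_M_nonneg {A B u : ℝ} (hA : 0 ≤ A) (hB : 0 ≤ B) :
    0 ≤ A * u ^ 4 + B * u ^ 2 := by positivity

lemma aux_Msum (A B : ℝ) (hA : 0 ≤ A) (hB : 0 ≤ B) {x : ℕ → ℝ}
    (hs : Summable fun n => x n ^ 2) {l : ℝ} (hl : 0 < l) :
    Summable (fun n => A * (|x n| / l) ^ 4 + B * (|x n| / l) ^ 2) ∧
    (∑' n, ENNReal.ofReal (A * (|x n| / l) ^ 4 + B * (|x n| / l) ^ 2))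
      = ENNReal.ofReal (∑' n, (A * (|x n| / l) ^ 4 + B * (|x n| / l) ^ 2)) ∧
    (∑' n, (A * (|x n| / l) ^ 4 + B * (|x n| / l) ^ 2))
      ≤ A * (∑' n, x n ^ 2) ^ 2 / l ^ 4 + B * (∑' n, x n ^ 2) / l ^ 2 := by
  set N := ∑' n, x n ^ 2 with hN
  have hterm : ∀ n, x n ^ 2 ≤ N :=
    fun n => Summable.le_tsum hs n (fun j _ => sq_nonneg _)
  have hNn : 0 ≤ N := tsum_nonneg fun n => sq_nonneg _
  have hbound : ∀ n, A * (|x n| / l) ^ 4 + B * (|x n| / l) ^ 2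
      ≤ (A * N / l ^ 4 + B / l ^ 2) * x n ^ 2 := by
    intro n
    have h1 : (|x n| / l) ^ 2 = x n ^ 2 / l ^ 2 := by
      rw [div_pow, sq_abs]
    have h2 : (|x n| / l) ^ 4 = (x n ^ 2) ^ 2 / l ^ 4 := by
      have : (|x n| / l) ^ 4 = ((|x n| / l) ^ 2) ^ 2 := by ring
      rw [this, h1]; ring
    rw [h1, h2]
    have h3 : (x n ^ 2) ^ 2 ≤ N * x n ^ 2 := by
      nlinarith [hterm n, sq_nonneg (x n)]
    have hrhs : (A * N / l ^ 4 + B / l ^ 2) * x n ^ 2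
        = A * ((N * x n ^ 2) / l ^ 4) + B * (x n ^ 2 / l ^ 2) := by ring
    rw [hrhs]
    have h4 := (div_le_div_iff_of_pos_right (show (0:ℝ) < l ^ 4 by positivity)).mpr h3
    nlinarith [mul_le_mul_of_nonneg_left h4 hA]
  have hsum2 : Summable fun n => (A * N / l ^ 4 + B / l ^ 2) * x n ^ 2 :=
    hs.mul_left _
  have hnonneg : ∀ n, 0 ≤ A * (|x n| / l) ^ 4 + B * (|x n| / l) ^ 2 := by
    intro n; positivity
  have hsum1 : Summable (fun n => A * (|x n| / l) ^ 4 + B * (|x n| / l) ^ 2) :=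
    Summable.of_nonneg_of_le hnonneg hbound hsum2
  refine ⟨hsum1, (ENNReal.ofReal_tsum_of_nonneg hnonneg hsum1).symm, ?_⟩
  calc (∑' n, (A * (|x n| / l) ^ 4 + B * (|x n| / l) ^ 2))
      ≤ ∑' n, (A * N / l ^ 4 + B / l ^ 2) * x n ^ 2 := Summable.tsum_le_tsum hbound hsum1 hsum2
    _ = (A * N / l ^ 4 + B / l ^ 2) * N := by rw [tsum_mul_left]
    _ = A * N ^ 2 / l ^ 4 + B * N / l ^ 2 := by ring

/-- ℓ₂-summability of members of the Orlicz space. -/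

lemma aux_summable_sq (A B : ℝ) (hA : 0 ≤ A) (hB : 0 < B) {x : ℕ → ℝ}
    (h : MemOrlicz (fun t => A * t ^ 4 + B * t ^ 2) x) :
    Summable fun n => x n ^ 2 := by
  obtain ⟨l, hl, hfin⟩ := h
  have hle : ∀ n, ENNReal.ofReal (B * (x n ^ 2 / l ^ 2))
      ≤ ENNReal.ofReal ((fun t => A * t ^ 4 + B * t ^ 2) (|x n| / l)) := by
    intro n
    apply ENNReal.ofReal_le_ofReal
    simp only
    have h1 : (|x n| / l) ^ 2 = x n ^ 2 / l ^ 2 := by rw [div_pow, sq_abs]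
    nlinarith [pow_nonneg (abs_nonneg (x n)) 4, div_nonneg (abs_nonneg (x n)) hl.le,
      mul_nonneg hA (pow_nonneg (div_nonneg (abs_nonneg (x n)) hl.le) 4)]
  have hfin2 : (∑' n, ENNReal.ofReal (B * (x n ^ 2 / l ^ 2))) ≠ ⊤ :=
    ((ENNReal.tsum_le_tsum hle).trans_lt hfin).ne
  have hsum := ENNReal.summable_toReal hfin2
  have heq : ∀ n, (ENNReal.ofReal (B * (x n ^ 2 / l ^ 2))).toReal = B * (x n ^ 2 / l ^ 2) := by
    intro n; rw [ENNReal.toReal_ofReal (by positivity)]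
  have hsum2 : Summable fun n => B * (x n ^ 2 / l ^ 2) := by
    apply hsum.congr; intro n; rw [heq]
  have := hsum2.mul_left (l ^ 2 / B)
  apply this.congr
  intro n
  field_simp

/-- lower ℓ₂ bound coming from the modular inequality. -/

lemma aux_Bsum_le (A B : ℝ) (hA : 0 ≤ A) (hB : 0 < B) {x : ℕ → ℝ}
    (hs : Summable fun n => x n ^ 2) {l : ℝ} (hl : 0 < l)
    (h : ∑' n, ENNReal.ofReal ((fun t => A * t ^ 4 + B * t ^ 2) (|x n| / l)) ≤ 1) :
    B * (∑' n, x n ^ 2) ≤ l ^ 2 := by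
  have hle : ∀ n, ENNReal.ofReal (B * (x n ^ 2 / l ^ 2))
      ≤ ENNReal.ofReal ((fun t => A * t ^ 4 + B * t ^ 2) (|x n| / l)) := by
    intro n
    apply ENNReal.ofReal_le_ofReal
    simp only
    have h1 : (|x n| / l) ^ 2 = x n ^ 2 / l ^ 2 := by rw [div_pow, sq_abs]
    nlinarith [mul_nonneg hA (pow_nonneg (div_nonneg (abs_nonneg (x n)) hl.le) 4)]
  have hsum2 : Summable fun n => B * (x n ^ 2 / l ^ 2) := by
    apply (hs.mul_left (B / l ^ 2)).congr; intro n; ring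
  have heq : (∑' n, ENNReal.ofReal (B * (x n ^ 2 / l ^ 2)))
      = ENNReal.ofReal (∑' n, B * (x n ^ 2 / l ^ 2)) :=
    (ENNReal.ofReal_tsum_of_nonneg (fun n => by positivity) hsum2).symm
  have h2 : ENNReal.ofReal (∑' n, B * (x n ^ 2 / l ^ 2)) ≤ 1 := by
    rw [← heq]; exact (ENNReal.tsum_le_tsum hle).trans h
  rw [← ENNReal.ofReal_one] at h2
  have h3 : (∑' n, B * (x n ^ 2 / l ^ 2)) ≤ 1 := by
    by_contra hcon
    push_neg at hcon
    exact absurd (ENNReal.ofReal_le_ofReal_iff (by norm_num) |>.mp h2) (not_le.mpr hcon)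
  have h4 : (∑' n, B * (x n ^ 2 / l ^ 2)) = B / l ^ 2 * ∑' n, x n ^ 2 := by
    rw [← tsum_mul_left]; congr 1; funext n; ring
  rw [h4] at h3
  rw [div_mul_eq_mul_div, div_le_one (by positivity)] at h3
  linarith

lemma aux_lux_single (A B c : ℝ) (hA : 0 ≤ A) (hB : 0 < B) (hc : 0 < c)
    (hc4 : c ^ 4 = B * c ^ 2 + A) (n : ℕ) {s : ℝ} (hs : 0 < s) :
    luxNorm (fun t => A * t ^ 4 + B * t ^ 2) (fun k => if k = n then s else 0) = s * c := by
  have hone : A * (1 / c) ^ 4 + B * (1 / c) ^ 2 = 1 := by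
    have h6 : A * (1 / c) ^ 4 + B * (1 / c) ^ 2 = (A + B * c ^ 2) / c ^ 4 := by
      field_simp
    rw [h6, show A + B * c ^ 2 = c ^ 4 by linarith, div_self (by positivity)]
  have hMsum : ∀ l : ℝ, 0 < l →
      (∑' k, ENNReal.ofReal ((fun t => A * t ^ 4 + B * t ^ 2)
        (|(fun k => if k = n then s else 0) k| / l)))
      = ENNReal.ofReal (A * (s / l) ^ 4 + B * (s / l) ^ 2) := by
    intro l hl
    rw [tsum_eq_single n]
    · norm_num [abs_of_pos hs]
    · intro b hb
      simp only [if_neg hb, abs_zero, zero_div]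
      norm_num
  apply le_antisymm
  · apply aux_lux_le _ _ (by positivity : (0:ℝ) < s * c)
    rw [hMsum _ (by positivity)]
    have : s / (s * c) = 1 / c := by field_simp
    rw [this, hone, ENNReal.ofReal_one]
  · apply aux_le_lux
    · refine ⟨s * c, by positivity, ?_⟩
      rw [hMsum _ (by positivity)]
      have : s / (s * c) = 1 / c := by field_simp
      rw [this, hone, ENNReal.ofReal_one]
    · intro l hl hle
      rw [hMsum _ hl] at hle
      have h1 : A * (s / l) ^ 4 + B * (s / l) ^ 2 ≤ 1 := by
        by_contra hcon
        push_neg at hcon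
        rw [← ENNReal.ofReal_one] at hle
        exact absurd (ENNReal.ofReal_le_ofReal_iff (by norm_num) |>.mp hle)
          (not_le.mpr hcon)
      -- conclude s / l ≤ 1 / c
      have h2 : s / l ≤ 1 / c := by
        by_contra hcon
        push_neg at hcon
        have hu : 0 < s / l := by positivity
        have h1c : (0:ℝ) < 1 / c := by positivity
        have hsq : (1 / c) ^ 2 < (s / l) ^ 2 := by nlinarith
        have hq : (1 / c) ^ 4 < (s / l) ^ 4 := by nlinarith [sq_nonneg (1/c), sq_nonneg (s/l)]
        have : A * (1 / c) ^ 4 + B * (1 / c) ^ 2 < A * (s / l) ^ 4 + B * (s / l) ^ 2 := by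
          nlinarith [mul_le_mul_of_nonneg_left hq.le hA]
        rw [hone] at this
        linarith
      rw [div_le_div_iff₀ hl (by positivity) ] at h2 <;> try skip
      · linarith [h2]

/-- Norm bound for vectors supported on a finite set with entries bounded by `t`. -/

lemma aux_lux_finset (A B c : ℝ) (hA : 0 ≤ A) (hB : 0 < B) (hc : 0 < c)
    (hc4 : c ^ 4 = B * c ^ 2 + A) {t : ℝ} (ht : 0 < t) (F : Finset ℕ) (hF : F.Nonempty)
    (y : ℕ → ℝ) (hy : ∀ k, |y k| ≤ t) :
    luxNorm (fun t => A * t ^ 4 + B * t ^ 2) (fun k => if k ∈ F then y k else 0)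
      ≤ t * c * Real.sqrt F.card := by
  have hcard : (1:ℝ) ≤ (F.card : ℝ) := by
    have := Finset.card_pos.mpr hF
    exact_mod_cast this
  have hsq : Real.sqrt F.card ^ 2 = (F.card : ℝ) := Real.sq_sqrt (by positivity)
  have hsqpos : 0 < Real.sqrt F.card := Real.sqrt_pos.mpr (by linarith)
  set l := t * c * Real.sqrt F.card with hl
  have hlpos : 0 < l := by positivity
  apply aux_lux_le _ _ hlpos
  have hzero : ∀ b ∉ F, ENNReal.ofReal ((fun u => A * u ^ 4 + B * u ^ 2)
      (|(fun k => if k ∈ F then y k else 0) b| / l)) = 0 := by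
    intro b hb
    simp only [if_neg hb, abs_zero, zero_div]
    norm_num
  rw [tsum_eq_sum hzero]
  have hterm : ∀ b ∈ F, ENNReal.ofReal ((fun u => A * u ^ 4 + B * u ^ 2)
      (|(fun k => if k ∈ F then y k else 0) b| / l))
      ≤ ENNReal.ofReal (A * (t / l) ^ 4 + B * (t / l) ^ 2) := by
    intro b hb
    simp only [if_pos hb]
    apply ENNReal.ofReal_le_ofReal
    refine aux_M_mono hA hB.le (by positivity) ?_
    gcongr
    exact hy b
  have hsum := Finset.sum_le_card_nsmul F _ _ hterm
  apply hsum.trans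
  rw [nsmul_eq_mul]
  have : (F.card : ℝ≥0∞) * ENNReal.ofReal (A * (t / l) ^ 4 + B * (t / l) ^ 2)
      = ENNReal.ofReal ((F.card : ℝ) * (A * (t / l) ^ 4 + B * (t / l) ^ 2)) := by
    rw [ENNReal.ofReal_mul (by positivity), ENNReal.ofReal_natCast]
  rw [this]
  rw [← ENNReal.ofReal_one]
  apply ENNReal.ofReal_le_ofReal
  -- arithmetic: m * (A t⁴/l⁴ + B t²/l²) ≤ 1 with l² = t²c²m
  have hl2 : l ^ 2 = t ^ 2 * c ^ 2 * (F.card : ℝ) := by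
    rw [hl]; rw [mul_pow, mul_pow, hsq]
  have hl4 : l ^ 4 = t ^ 4 * c ^ 4 * (F.card : ℝ) ^ 2 := by
    have : l ^ 4 = (l ^ 2) ^ 2 := by ring
    rw [this, hl2]; ring
  have h1 : (t / l) ^ 2 = 1 / (c ^ 2 * (F.card : ℝ)) := by
    rw [div_pow, hl2]
    field_simp
  have h2 : (t / l) ^ 4 = 1 / (c ^ 4 * (F.card : ℝ) ^ 2) := by
    rw [div_pow, hl4]
    field_simp
  rw [h1, h2]
  have hm : (0:ℝ) < (F.card : ℝ) := by linarith
  have key : A / c ^ 4 + B / c ^ 2 = 1 := by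
    have h6 : A / c ^ 4 + B / c ^ 2 = (A + B * c ^ 2) / c ^ 4 := by
      field_simp
    rw [h6, show A + B * c ^ 2 = c ^ 4 by linarith, div_self (by positivity)]
  have hm1 : (1:ℝ) ≤ (F.card : ℝ) := hcard
  have e1 : (F.card : ℝ) * (A * (1 / (c ^ 4 * (F.card:ℝ) ^ 2)) + B * (1 / (c ^ 2 * (F.card:ℝ))))
      = A / (c ^ 4 * (F.card:ℝ)) + B / c ^ 2 := by
    field_simp
  rw [e1]
  have e2 : A / (c ^ 4 * (F.card:ℝ)) ≤ A / c ^ 4 := by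
    gcongr
    nlinarith [pow_pos hc 4]
  linarith

set_option maxHeartbeats 800000 in
lemma aux_wstar_null {X : Type*} [NormedAddCommGroup X] [NormedSpace ℝ X]
    (A B c : ℝ) (hA : 0 ≤ A) (hB : 0 < B) (hc : 0 < c) (hc4 : c ^ 4 = B * c ^ 2 + A)
    (ι : StrongDual ℝ X →ₗ[ℝ] (ℕ → ℝ))
    (hnormeq : ∀ y : StrongDual ℝ X, ‖y‖ = luxNorm (fun t => A * t ^ 4 + B * t ^ 2) (ι y))
    {t : ℝ} (ht : 0 < t) (w : ℕ → StrongDual ℝ X)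
    (hw : ∀ n, ι (w n) = fun k => if k = n then t else 0) (z : X) :
    Tendsto (fun n => (w n) z) atTop (𝓝 0) := by
  rw [Metric.tendsto_atTop]
  by_contra hcon
  push_neg at hcon
  obtain ⟨δ, hδ, hfreq⟩ := hcon
  simp only [Real.dist_eq, sub_zero] at hfreq
  set I : Set ℕ := {n | δ ≤ |w n z|} with hI
  have hinf : I.Infinite := by
    intro hfin
    obtain ⟨m, hm⟩ := hfin.bddAbove
    obtain ⟨n, hn, hnd⟩ := hfreq (m + 1)
    have : n ≤ m := hm hnd
    omega
  set K : ℝ := t * c * ‖z‖ with hK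
  have hKn : 0 ≤ K := by positivity
  set N : ℕ := ⌈(K / δ) ^ 2⌉₊ + 1 with hN
  obtain ⟨F, hFI, hcard⟩ := hinf.exists_subset_card_eq N
  have hFne : F.Nonempty := Finset.card_pos.mp (by omega)
  set σ : ℕ → ℝ := fun n => if 0 ≤ w n z then 1 else -1 with hσ
  set g : StrongDual ℝ X := ∑ n ∈ F, σ n • w n with hg
  have hgz : g z = ∑ n ∈ F, |w n z| := by
    rw [hg]
    rw [ContinuousLinearMap.sum_apply]
    apply Finset.sum_congr rfl
    intro n _
    rw [ContinuousLinearMap.smul_apply, smul_eq_mul, hσ]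
    by_cases h : 0 ≤ w n z
    · simp [h, abs_of_nonneg h]
    · simp [h, abs_of_neg (not_le.mp h)]
  have hglow : (N : ℝ) * δ ≤ g z := by
    rw [hgz]
    calc (N : ℝ) * δ = F.card • δ := by rw [hcard, nsmul_eq_mul]
      _ ≤ ∑ n ∈ F, |w n z| := Finset.card_nsmul_le_sum F _ δ (fun n hn => hFI hn)
  have hιg : ι g = fun k => if k ∈ F then σ k * t else 0 := by
    rw [hg, map_sum]
    funext k
    rw [Finset.sum_apply]
    have : ∀ n ∈ F, (ι (σ n • w n)) k = if k = n then σ n * t else 0 := by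
      intro n _
      rw [map_smul, Pi.smul_apply, hw n, smul_eq_mul]
      simp [mul_ite]
    rw [Finset.sum_congr rfl this, Finset.sum_ite_eq F k (fun n => σ n * t)]
  have hgnorm : ‖g‖ ≤ t * c * Real.sqrt N := by
    rw [hnormeq g, hιg]
    have := aux_lux_finset A B c hA hB hc hc4 ht F hFne (fun k => σ k * t) ?_
    · rwa [hcard] at this
    · intro k
      rw [abs_mul, hσ]
      by_cases h : 0 ≤ w k z <;> simp [h, abs_of_pos ht]
  -- combine
  have hup : g z ≤ ‖g‖ * ‖z‖ := by
    calc g z ≤ |g z| := le_abs_self _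
      _ = ‖g z‖ := (Real.norm_eq_abs _).symm
      _ ≤ ‖g‖ * ‖z‖ := g.le_opNorm z
  set S : ℝ := Real.sqrt N with hS
  have hS2 : S ^ 2 = (N : ℝ) := Real.sq_sqrt (by positivity)
  have hS1 : 1 ≤ S := by
    rw [hS, show (1:ℝ) = Real.sqrt 1 by rw [Real.sqrt_one]]
    apply Real.sqrt_le_sqrt
    have : 1 ≤ N := by omega
    exact_mod_cast this
  have hceil : (K / δ) ^ 2 < (N : ℝ) := by
    have h1 : (K / δ) ^ 2 ≤ (⌈(K / δ) ^ 2⌉₊ : ℝ) := Nat.le_ceil _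
    have h2 : ((⌈(K / δ) ^ 2⌉₊ : ℕ) : ℝ) + 1 = (N : ℝ) := by
      rw [hN]; push_cast; ring
    linarith
  have hmain : S ^ 2 * δ ≤ K * S := by
    have : (N:ℝ) * δ ≤ t * c * S * ‖z‖ := le_trans hglow (hup.trans (by
      have := mul_le_mul_of_nonneg_right hgnorm (norm_nonneg z)
      linarith [this]))
    rw [hS2]
    nlinarith [this]
  have hSpos : 0 < S := by linarith
  have hKS : S * δ ≤ K := by
    have := (mul_le_mul_iff_of_pos_right hSpos).mpr (le_refl (1:ℝ))
    nlinarith [hmain, hSpos]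
  have hK2 : K ^ 2 < S ^ 2 * δ ^ 2 := by
    have : K ^ 2 / δ ^ 2 < S ^ 2 := by
      rw [← div_pow]; rw [hS2]; exact hceil
    calc K ^ 2 = K ^ 2 / δ ^ 2 * δ ^ 2 := by field_simp
      _ < S ^ 2 * δ ^ 2 := by
          apply mul_lt_mul_of_pos_right this (by positivity)
  nlinarith [hKS, hK2, mul_pos hSpos hδ, hKn]
end SzlenkAux

set_option maxHeartbeats 1600000 in
/-- Example: for `X = (ℓ_{M_{A,B}})*` (so that `X* = ℓ_{M_{A,B}}`),
where `M_{A,B}(t) = At⁴ + Bt²`, with `C₁ = √B` and `C₂ = √((B + √(B² + 4A))/2)`,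
one has `R_X(ε) ≤ √(C₂²/C₁² - ε²/4)` for `ε ∈ (0,2)` and
`r_X(ε) ≥ √(C₁²/C₂² - ε²/4)` for `0 < ε < 2C₁/C₂`. -/
theorem RX_rX_bounds_orlicz_quartic_quadratic
    (A B : ℝ) (hA : 0 ≤ A) (hB : 0 < B)
    -- `X` is a Banach space whose dual is (identified with) `ℓ_{M_{A,B}}`:
    -- `ι` identifies `X*`, with its norm, with the sequence space `ℓ_{M_{A,B}}`
    -- carrying the Luxemburg norm
    {X : Type*} [NormedAddCommGroup X] [NormedSpace ℝ X] [CompleteSpace X]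
    (ι : StrongDual ℝ X →ₗ[ℝ] (ℕ → ℝ)) (hinj : Function.Injective ι)
    (hrange : Set.range ι = {x : ℕ → ℝ | MemOrlicz (fun t => A * t ^ 4 + B * t ^ 2) x})
    (hnormeq : ∀ y : StrongDual ℝ X, ‖y‖ = luxNorm (fun t => A * t ^ 4 + B * t ^ 2) (ι y))
    (C₁ C₂ : ℝ) (hC₁ : C₁ = Real.sqrt B)
    (hC₂ : C₂ = Real.sqrt ((B + Real.sqrt (B ^ 2 + 4 * A)) / 2)) :
    (∀ ε : ℝ, 0 < ε → ε < 2 →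
      RX X ε ≤ Real.sqrt (C₂ ^ 2 / C₁ ^ 2 - ε ^ 2 / 4) ∧
      Real.sqrt (C₂ ^ 2 / C₁ ^ 2 - ε ^ 2 / 4) =
        Real.sqrt ((B + Real.sqrt (B ^ 2 + 4 * A)) / (2 * B) - ε ^ 2 / 4)) ∧
    (∀ ε : ℝ, 0 < ε → ε < 2 * C₁ / C₂ →
      Real.sqrt (C₁ ^ 2 / C₂ ^ 2 - ε ^ 2 / 4) ≤ rX X ε ∧
      Real.sqrt (C₁ ^ 2 / C₂ ^ 2 - ε ^ 2 / 4) =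
        Real.sqrt (2 * B / (B + Real.sqrt (B ^ 2 + 4 * A)) - ε ^ 2 / 4)) := by
  classical
  set sq := Real.sqrt (B ^ 2 + 4 * A) with hsqdef
  have hsq0 : 0 ≤ sq := Real.sqrt_nonneg _
  have hsq2 : sq ^ 2 = B ^ 2 + 4 * A := Real.sq_sqrt (by positivity)
  have hsqB : B ≤ sq := by nlinarith only [hsq2, hsq0, hA, hB]
  have hC1sq : C₁ ^ 2 = B := by rw [hC₁, Real.sq_sqrt hB.le]
  have hC1pos : 0 < C₁ := hC₁ ▸ Real.sqrt_pos.mpr hB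
  have hC2sq : C₂ ^ 2 = (B + sq) / 2 := by rw [hC₂, Real.sq_sqrt (by positivity)]
  have hC2pos : 0 < C₂ := by rw [hC₂]; exact Real.sqrt_pos.mpr (by positivity)
  have hc4 : C₂ ^ 4 = B * C₂ ^ 2 + A := by
    have h : C₂ ^ 4 = (C₂ ^ 2) ^ 2 := by ring
    rw [h, hC2sq]; nlinarith only [hsq2]
  have honesum : A / C₂ ^ 4 + B / C₂ ^ 2 = 1 := by
    have h6 : A / C₂ ^ 4 + B / C₂ ^ 2 = (A + B * C₂ ^ 2) / C₂ ^ 4 := by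
      field_simp
    rw [h6, show A + B * C₂ ^ 2 = C₂ ^ 4 by linarith only [hc4], div_self (by positivity)]
  have hC12 : C₁ ≤ C₂ := by
    rw [hC₁, hC₂]
    exact Real.sqrt_le_sqrt (by linarith only [hsqB])
  -- basic sequence-space toolkit
  have hmem : ∀ f : StrongDual ℝ X, MemOrlicz (fun t => A * t ^ 4 + B * t ^ 2) (ι f) := by
    intro f
    have h : ι f ∈ Set.range ι := ⟨f, rfl⟩
    rw [hrange] at h
    exact h
  have hsumsq : ∀ f : StrongDual ℝ X, Summable fun n => (ι f) n ^ 2 :=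
    fun f => aux_summable_sq A B hA hB (hmem f)
  have hnsq0 : ∀ f : StrongDual ℝ X, 0 ≤ ∑' n, (ι f) n ^ 2 :=
    fun f => tsum_nonneg fun n => sq_nonneg _
  have hzero : ∀ f : StrongDual ℝ X, (∑' n, (ι f) n ^ 2) = 0 → f = 0 := by
    intro f h0
    apply hinj
    rw [map_zero]
    funext n
    have h1 : (ι f) n ^ 2 ≤ 0 := h0 ▸ Summable.le_tsum (hsumsq f) n (fun j _ => sq_nonneg _)
    have h2 : (ι f) n ^ 2 = 0 := le_antisymm h1 (sq_nonneg _)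
    exact pow_eq_zero_iff (by norm_num : (2:ℕ) ≠ 0) |>.mp h2
  have hcore : ∀ f : StrongDual ℝ X, 0 < (∑' n, (ι f) n ^ 2) →
      ∑' n, ENNReal.ofReal (A * (|(ι f) n| / (C₂ * Real.sqrt (∑' m, (ι f) m ^ 2))) ^ 4
        + B * (|(ι f) n| / (C₂ * Real.sqrt (∑' m, (ι f) m ^ 2))) ^ 2) ≤ 1 := by
    intro f hN
    set N := ∑' m, (ι f) m ^ 2 with hNdef
    set l := C₂ * Real.sqrt N with hldef
    have hl : 0 < l := mul_pos hC2pos (Real.sqrt_pos.mpr hN)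
    obtain ⟨hsml, heq, hle⟩ := aux_Msum A B hA hB.le (hsumsq f) hl
    rw [heq, ← ENNReal.ofReal_one]
    apply ENNReal.ofReal_le_ofReal
    have hl2 : l ^ 2 = C₂ ^ 2 * N := by rw [hldef, mul_pow, Real.sq_sqrt hN.le]
    have hl4 : l ^ 4 = C₂ ^ 4 * N ^ 2 := by
      have h : l ^ 4 = (l ^ 2) ^ 2 := by ring
      rw [h, hl2]; ring
    have hval : A * N ^ 2 / l ^ 4 + B * N / l ^ 2 = A / C₂ ^ 4 + B / C₂ ^ 2 := by
      rw [hl2, hl4]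
      field_simp
    linarith only [hle, hval, honesum]
  have hub : ∀ f : StrongDual ℝ X, ‖f‖ ≤ C₂ * Real.sqrt (∑' n, (ι f) n ^ 2) := by
    intro f
    rcases eq_or_lt_of_le (hnsq0 f) with h0 | hN
    · rw [hzero f h0.symm]
      simp only [norm_zero]
      positivity
    · rw [hnormeq f]
      exact aux_lux_le _ _ (mul_pos hC2pos (Real.sqrt_pos.mpr hN)) (hcore f hN)
  have hwit : ∀ f : StrongDual ℝ X, ∃ l : ℝ, 0 < l ∧
      ∑' n, ENNReal.ofReal ((fun t => A * t ^ 4 + B * t ^ 2) (|(ι f) n| / l)) ≤ 1 := by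
    intro f
    rcases eq_or_lt_of_le (hnsq0 f) with h0 | hN
    · refine ⟨1, one_pos, ?_⟩
      have hx : ι f = 0 := by rw [hzero f h0.symm, map_zero]
      rw [hx]
      simp
    · exact ⟨C₂ * Real.sqrt (∑' n, (ι f) n ^ 2),
        mul_pos hC2pos (Real.sqrt_pos.mpr hN), hcore f hN⟩
  have hlb : ∀ f : StrongDual ℝ X, C₁ * Real.sqrt (∑' n, (ι f) n ^ 2) ≤ ‖f‖ := by
    intro f
    rw [hnormeq f]
    apply aux_le_lux _ _ (hwit f)
    intro l hl hle
    have hBN := aux_Bsum_le A B hA hB (hsumsq f) hl hle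
    have hsql : (C₁ * Real.sqrt (∑' n, (ι f) n ^ 2)) ^ 2 = B * (∑' n, (ι f) n ^ 2) := by
      rw [mul_pow, hC1sq, Real.sq_sqrt (hnsq0 f)]
    nlinarith only [hBN, hsql, mul_nonneg hC1pos.le (Real.sqrt_nonneg (∑' n, (ι f) n ^ 2)), hl,
      sq_nonneg (C₁ * Real.sqrt (∑' n, (ι f) n ^ 2) - l)]
  have hpar : ∀ u v : StrongDual ℝ X,
      (∑' n, (ι (u - v)) n ^ 2)
        = 2 * (∑' n, (ι u) n ^ 2) + 2 * (∑' n, (ι v) n ^ 2) - (∑' n, (ι (u + v)) n ^ 2) := by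
    intro u v
    have ha := hsumsq u
    have hb := hsumsq v
    have hab2 : Summable (fun n => 2 * (ι u) n ^ 2 + 2 * (ι v) n ^ 2) :=
      (ha.mul_left 2).add (hb.mul_left 2)
    have hab : Summable (fun n => ((ι u) n + (ι v) n) ^ 2) :=
      Summable.of_nonneg_of_le (fun n => sq_nonneg _)
        (fun n => by nlinarith only [sq_nonneg ((ι u) n - (ι v) n)]) hab2
    rw [map_sub, map_add]
    simp only [Pi.sub_apply, Pi.add_apply]
    have h1 : ∀ n : ℕ, ((ι u) n - (ι v) n) ^ 2
        = (2 * (ι u) n ^ 2 + 2 * (ι v) n ^ 2) - ((ι u) n + (ι v) n) ^ 2 := fun n => by ring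
    rw [tsum_congr h1, Summable.tsum_sub hab2 hab,
      Summable.tsum_add (ha.mul_left 2) (hb.mul_left 2), tsum_mul_left, tsum_mul_left]
  -- basis vectors
  have hbasis : ∀ n : ℕ, ∃ f : StrongDual ℝ X, ι f = fun k => if k = n then (1 : ℝ) else 0 := by
    intro n
    have hm : MemOrlicz (fun t => A * t ^ 4 + B * t ^ 2) (fun k => if k = n then (1:ℝ) else 0) := by
      refine ⟨1, one_pos, ?_⟩
      rw [tsum_eq_single n ?_]
      · exact ENNReal.ofReal_lt_top
      · intro b hb
        norm_num [hb]
    have h : (fun k => if k = n then (1:ℝ) else 0) ∈ Set.range ι := by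
      rw [hrange]; exact hm
    exact h
  choose en hen using hbasis
  have hennorm : ∀ n, ‖en n‖ = C₂ := by
    intro n
    rw [hnormeq (en n), hen n,
      aux_lux_single A B C₂ hA hB hC2pos hc4 n one_pos, one_mul]
  constructor
  · -- Part 1: RX bound
    intro ε hε0 hε2
    have hC2C1 : (1:ℝ) ≤ C₂ ^ 2 / C₁ ^ 2 := by
      rw [le_div_iff₀ (by positivity)]
      rw [hC1sq, hC2sq]; linarith only [hsqB]
    have harg : 0 < C₂ ^ 2 / C₁ ^ 2 - ε ^ 2 / 4 := by nlinarith only [hC2C1, hε0, hε2]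
    set R := Real.sqrt (C₂ ^ 2 / C₁ ^ 2 - ε ^ 2 / 4) with hRdef
    have hRpos : 0 < R := Real.sqrt_pos.mpr harg
    have hR2 : R ^ 2 = C₂ ^ 2 / C₁ ^ 2 - ε ^ 2 / 4 := Real.sq_sqrt harg.le
    constructor
    · -- RX X ε ≤ R
      apply csInf_le ⟨0, fun b hb => hb.1.le⟩
      refine ⟨hRpos, ?_⟩
      intro x hx
      simp only [szlenkDeriv, Set.mem_setOf_eq] at hx
      obtain ⟨hxB, hxP⟩ := hx
      rw [mem_closedBall_zero_iff]
      by_contra hcon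
      push_neg at hcon
      -- find norming functional
      have hnot : ¬ ∀ z : X, ‖x z‖ ≤ R * ‖z‖ := by
        intro h
        exact absurd (ContinuousLinearMap.opNorm_le_bound x hRpos.le h) (not_le.mpr hcon)
      push_neg at hnot
      obtain ⟨z, hz⟩ := hnot
      have hzn : 0 < ‖z‖ := by
        rcases eq_or_ne z 0 with rfl | hne
        · simp at hz
        · exact norm_pos_iff.mpr hne
      set s0 : ℝ := if 0 ≤ x z then 1 else -1 with hs0def
      set w : X := (s0 / ‖z‖) • z with hwdef
      have hxw : R < x w := by
        rw [hwdef, map_smul, smul_eq_mul]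
        have hsxz : s0 * x z = ‖x z‖ := by
          rw [Real.norm_eq_abs, hs0def]
          by_cases h : 0 ≤ x z
          · simp [h, abs_of_nonneg h]
          · simp [h, abs_of_neg (not_le.mp h)]
        rw [div_mul_eq_mul_div, hsxz]
        rw [lt_div_iff₀ hzn]
        linarith only [hz]
      have hwnorm : ‖w‖ = 1 := by
        rw [hwdef, norm_smul, norm_div, Real.norm_eq_abs, Real.norm_eq_abs]
        have : |s0| = 1 := by
          rw [hs0def]; by_cases h : 0 ≤ x z <;> simp [h]
        rw [this, abs_of_nonneg (norm_nonneg z)]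
        field_simp
      set V : Set (StrongDual ℝ X) := {f | R < f w} with hVdef
      have hVopen : IsWeakStarOpen V := by
        show IsOpen (StrongDual.toWeakDual '' V)
        have himg : StrongDual.toWeakDual '' V = {g : WeakDual ℝ X | R < g w} := by
          ext g
          constructor
          · rintro ⟨f, hf, rfl⟩
            exact hf
          · intro hg
            exact ⟨StrongDual.toWeakDual.symm g, by
              exact hg, by simp⟩
        rw [himg]
        exact isOpen_lt continuous_const (WeakDual.eval_continuous w)
      have hdiam := hxP V hVopen hxw
      apply absurd hdiam
      apply not_lt.mpr
      apply diam_le_of_forall_dist_le hε0.le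
      intro u hu v hv
      have hu1 : ‖u‖ ≤ 1 := mem_closedBall_zero_iff.mp hu.1
      have hv1 : ‖v‖ ≤ 1 := mem_closedBall_zero_iff.mp hv.1
      have huw : R < u w := hu.2
      have hvw : R < v w := hv.2
      have hsum : 2 * R < ‖u + v‖ := by
        have h1 : (u + v) w = u w + v w := rfl
        have h2 : (u + v) w ≤ ‖u + v‖ := by
          calc (u + v) w ≤ |(u + v) w| := le_abs_self _
            _ = ‖(u + v) w‖ := (Real.norm_eq_abs _).symm
            _ ≤ ‖u + v‖ * ‖w‖ := (u + v).le_opNorm w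
            _ = ‖u + v‖ := by rw [hwnorm, mul_one]
        rw [h1] at h2
        linarith only [h2, huw, hvw]
      have hd := hpar u v
      set na := ∑' n, (ι u) n ^ 2 with hnadef
      set nb := ∑' n, (ι v) n ^ 2 with hnbdef
      set nab := ∑' n, (ι (u + v)) n ^ 2 with hnabdef
      set nd := ∑' n, (ι (u - v)) n ^ 2 with hnddef
      have hna1 : B * na ≤ 1 := by
        have h1 : C₁ * Real.sqrt na ≤ 1 := le_trans (hlb u) hu1
        have h2 : (C₁ * Real.sqrt na) ^ 2 = B * na := by
          rw [mul_pow, hC1sq, Real.sq_sqrt (hnsq0 u)]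
        nlinarith only [h1, h2, mul_nonneg hC1pos.le (Real.sqrt_nonneg na)]
      have hnb1 : B * nb ≤ 1 := by
        have h1 : C₁ * Real.sqrt nb ≤ 1 := le_trans (hlb v) hv1
        have h2 : (C₁ * Real.sqrt nb) ^ 2 = B * nb := by
          rw [mul_pow, hC1sq, Real.sq_sqrt (hnsq0 v)]
        nlinarith only [h1, h2, mul_nonneg hC1pos.le (Real.sqrt_nonneg nb)]
      have hnab1 : 4 * R ^ 2 < C₂ ^ 2 * nab := by
        have h1 : 2 * R < C₂ * Real.sqrt nab := lt_of_lt_of_le hsum (hub (u + v))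
        have h2 : (C₂ * Real.sqrt nab) ^ 2 = C₂ ^ 2 * nab := by
          rw [mul_pow, Real.sq_sqrt (hnsq0 (u + v))]
        nlinarith only [h1, h2, hRpos]
      have hkey : C₂ ^ 2 * nd ≤ ε ^ 2 := by
        have e1 : C₂ ^ 2 * na ≤ C₂ ^ 2 / B := by
          rw [div_eq_mul_inv]
          have : na ≤ B⁻¹ := by
            rw [← one_div]
            rw [le_div_iff₀ hB]
            linarith only [hna1]
          nlinarith only [this, sq_nonneg C₂]
        have e2 : C₂ ^ 2 * nb ≤ C₂ ^ 2 / B := by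
          rw [div_eq_mul_inv]
          have : nb ≤ B⁻¹ := by
            rw [← one_div]
            rw [le_div_iff₀ hB]
            linarith only [hnb1]
          nlinarith only [this, sq_nonneg C₂]
        have hR2' : R ^ 2 = C₂ ^ 2 / B - ε ^ 2 / 4 := by rw [hR2, hC1sq]
        have hd' : nd = 2 * na + 2 * nb - nab := hd
        rw [hd']
        have hexp : C₂ ^ 2 * (2 * na + 2 * nb - nab)
            = 2 * (C₂ ^ 2 * na) + 2 * (C₂ ^ 2 * nb) - C₂ ^ 2 * nab := by ring
        rw [hexp]
        linarith only [e1, e2, hnab1, hR2']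
      have hdn : ‖u - v‖ ≤ ε := by
        have h1 : ‖u - v‖ ≤ C₂ * Real.sqrt nd := hub (u - v)
        have h2 : C₂ * Real.sqrt nd = Real.sqrt (C₂ ^ 2 * nd) := by
          rw [Real.sqrt_mul (sq_nonneg C₂), Real.sqrt_sq hC2pos.le]
        have h3 : Real.sqrt (C₂ ^ 2 * nd) ≤ Real.sqrt (ε ^ 2) := Real.sqrt_le_sqrt hkey
        rw [Real.sqrt_sq hε0.le] at h3
        linarith only [h1, h2, h3]
      rw [dist_eq_norm]
      exact hdn
    · -- equality of square roots
      have h : C₂ ^ 2 / C₁ ^ 2 = (B + sq) / (2 * B) := by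
        rw [hC1sq, hC2sq, div_div]
      rw [hRdef, h]
  · -- Part 2: rX bound
    intro ε hε0 hεlt
    have hεC : ε * C₂ < 2 * C₁ := (lt_div_iff₀ hC2pos).mp hεlt
    have hargpos : 0 < C₁ ^ 2 / C₂ ^ 2 - ε ^ 2 / 4 := by
      have h1 : ε ^ 2 * C₂ ^ 2 < 4 * C₁ ^ 2 := by
        have h0 : 0 < ε * C₂ := mul_pos hε0 hC2pos
        have h1' : (ε * C₂) * (ε * C₂) < (2 * C₁) * (2 * C₁) :=
          mul_lt_mul'' hεC hεC h0.le h0.le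
        nlinarith only [h1']
      have h2 : ε ^ 2 < 4 * C₁ ^ 2 / C₂ ^ 2 := by
        rw [lt_div_iff₀ (by positivity)]
        linarith only [h1]
      have h3 : 4 * C₁ ^ 2 / C₂ ^ 2 = 4 * (C₁ ^ 2 / C₂ ^ 2) := by ring
      rw [h3] at h2
      linarith only [h2]
    set ρ := Real.sqrt (C₁ ^ 2 / C₂ ^ 2 - ε ^ 2 / 4) with hρdef
    have hρpos : 0 < ρ := Real.sqrt_pos.mpr hargpos
    have hρ2 : ρ ^ 2 = C₁ ^ 2 / C₂ ^ 2 - ε ^ 2 / 4 := Real.sq_sqrt hargpos.le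
    have hρ1 : ρ ≤ 1 := by
      have h1 : C₁ ^ 2 / C₂ ^ 2 ≤ 1 := by
        rw [div_le_one (by positivity)]
        nlinarith only [hC12, hC1pos, hC2pos]
      have h2 : ρ ^ 2 ≤ 1 := by rw [hρ2]; nlinarith only [h1, sq_nonneg ε]
      nlinarith only [hρpos, h2]
    constructor
    · -- ρ ≤ rX
      -- core claim
      have hcore2 : ∀ r : ℝ, 0 < r → r < ρ →
          closedBall (0 : StrongDual ℝ X) r ⊆ szlenkDeriv ε (closedBall (0 : StrongDual ℝ X) 1) := by
        intro r hr0 hrρ y hy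
        have hyr : ‖y‖ ≤ r := mem_closedBall_zero_iff.mp hy
        simp only [szlenkDeriv, Set.mem_setOf_eq]
        refine ⟨mem_closedBall_zero_iff.mpr (le_trans hyr (le_trans hrρ.le hρ1)), ?_⟩
        intro V hV hyV
        set x := ι y with hxdef
        have hsx : Summable fun n => x n ^ 2 := hsumsq y
        set na := ∑' n, x n ^ 2 with hnadef
        have hna0 : 0 ≤ na := hnsq0 y
        have hBna : B * na ≤ r ^ 2 := by
          have h1 : C₁ * Real.sqrt na ≤ r := le_trans (hlb y) hyr
          have h2 : (C₁ * Real.sqrt na) ^ 2 = B * na := by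
            rw [mul_pow, hC1sq, Real.sq_sqrt hna0]
          nlinarith only [h1, h2, mul_nonneg hC1pos.le (Real.sqrt_nonneg na)]
        set t₀ := ε / (2 * C₂) with ht₀def
        have ht₀pos : 0 < t₀ := by positivity
        -- modular sum at l = 1
        obtain ⟨hsmT, hTeq, hTle⟩ := aux_Msum A B hA hB.le hsx one_pos
        simp only [div_one, one_pow, mul_one] at hsmT hTeq hTle
        set T := ∑' n, (A * |x n| ^ 4 + B * |x n| ^ 2) with hTdef
        have hT0 : 0 ≤ T := tsum_nonneg fun n => by positivity
        have hTle2 : T ≤ A * na ^ 2 + B * na := by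
          calc T ≤ A * na ^ 2 / 1 ^ 4 + B * na / 1 ^ 2 := by
                have := hTle
                simpa using this
            _ = A * na ^ 2 + B * na := by norm_num
        -- strict inequality T + M t₀ < 1
        have hstrict : T + (A * t₀ ^ 4 + B * t₀ ^ 2) < 1 := by
          have hb' : t₀ ^ 2 = ε ^ 2 / (4 * C₂ ^ 2) := by
            rw [ht₀def]; field_simp; ring
          have ha' : na < 1 / C₂ ^ 2 - ε ^ 2 / (4 * B) := by
            have h1 : B * na < ρ ^ 2 := lt_of_le_of_lt hBna (by nlinarith only [hr0, hrρ])
            have h2 : na < ρ ^ 2 / B := by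
              rw [lt_div_iff₀ hB]
              linarith only [h1]
            have h3 : ρ ^ 2 / B = 1 / C₂ ^ 2 - ε ^ 2 / (4 * B) := by
              rw [hρ2, hC1sq]
              field_simp
            rw [h3] at h2
            exact h2
          have hBC2 : B ≤ C₂ ^ 2 := by rw [hC2sq]; linarith only [hsqB]
          have hb'' : t₀ ^ 2 ≤ ε ^ 2 / (4 * B) := by
            rw [hb', div_le_div_iff₀ (by positivity) (by positivity)]
            nlinarith only [sq_nonneg ε, hBC2]
          have hab : na + t₀ ^ 2 < 1 / C₂ ^ 2 := by linarith only [ha', hb'']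
          have ht₀4 : t₀ ^ 4 = (t₀ ^ 2) ^ 2 := by ring
          have hs1 : A / C₂ ^ 4 = A * (1 / C₂ ^ 2) ^ 2 := by
            rw [div_pow, one_pow, mul_one_div,
              show (C₂ ^ 2) ^ 2 = C₂ ^ 4 from by ring]
          have hs2 : B / C₂ ^ 2 = B * (1 / C₂ ^ 2) := by field_simp
          have hb0 : 0 ≤ t₀ ^ 2 := sq_nonneg _
          have step1 : A * na ^ 2 + A * (t₀ ^ 2) ^ 2 ≤ A * (na + t₀ ^ 2) ^ 2 := by
            nlinarith only [mul_nonneg (mul_nonneg hA hna0) hb0]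
          have habs : (na + t₀ ^ 2) ^ 2 ≤ (1 / C₂ ^ 2) ^ 2 := by
            nlinarith only [add_nonneg hna0 hb0, hab]
          have step2 : A * (na + t₀ ^ 2) ^ 2 ≤ A * (1 / C₂ ^ 2) ^ 2 :=
            mul_le_mul_of_nonneg_left habs hA
          have step3 : B * (na + t₀ ^ 2) < B * (1 / C₂ ^ 2) :=
            mul_lt_mul_of_pos_left hab hB
          have hfin : A * na ^ 2 + B * na + (A * t₀ ^ 4 + B * t₀ ^ 2)
              < A * (1 / C₂ ^ 2) ^ 2 + B * (1 / C₂ ^ 2) := by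
            rw [ht₀4]
            linarith only [step1, step2, step3]
          have hone : A * (1 / C₂ ^ 2) ^ 2 + B * (1 / C₂ ^ 2) = 1 := by
            rw [← hs1, ← hs2]; linarith only [honesum]
          linarith only [hTle2, hfin, hone]
        set η := 1 - (T + (A * t₀ ^ 4 + B * t₀ ^ 2)) with hηdef
        have hη : 0 < η := by rw [hηdef]; linarith only [hstrict]
        -- choose δ by continuity
        have hcontf : ContinuousAt (fun u : ℝ => A * (t₀ + 2 * u) ^ 4 + B * (t₀ + 2 * u) ^ 2) 0 := by
          fun_prop
        have hev : ∀ᶠ u in 𝓝 (0:ℝ),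
            A * (t₀ + 2 * u) ^ 4 + B * (t₀ + 2 * u) ^ 2 < A * t₀ ^ 4 + B * t₀ ^ 2 + η := by
          have h0 : A * (t₀ + 2 * (0:ℝ)) ^ 4 + B * (t₀ + 2 * (0:ℝ)) ^ 2
              < A * t₀ ^ 4 + B * t₀ ^ 2 + η := by
            norm_num
            linarith only [hη]
          exact Filter.Tendsto.eventually_lt_const h0 hcontf
        rw [Metric.eventually_nhds_iff] at hev
        obtain ⟨δ', hδ'pos, hδ'⟩ := hev
        set δ := δ' / 2 with hδdef
        have hδpos : 0 < δ := by positivity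
        have hδb : A * (t₀ + 2 * δ) ^ 4 + B * (t₀ + 2 * δ) ^ 2 < A * t₀ ^ 4 + B * t₀ ^ 2 + η := by
          apply hδ'
          rw [Real.dist_eq, sub_zero, abs_of_pos hδpos]
          rw [hδdef]; linarith only [hδ'pos]
        set t := t₀ + δ with htdef
        have htpos : 0 < t := by positivity
        have htgt : ε < 2 * t * C₂ := by
          have h1 : 2 * t₀ * C₂ = ε := by
            rw [ht₀def]; field_simp
          rw [htdef]
          have h2 : 2 * (t₀ + δ) * C₂ = ε + 2 * δ * C₂ := by rw [← h1]; ring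
          rw [h2]
          linarith only [mul_pos hδpos hC2pos]
        -- perturbed functionals norm bound
        have hTofReal : (∑' k, ENNReal.ofReal (A * |x k| ^ 4 + B * |x k| ^ 2))
            = ENNReal.ofReal T := hTeq
        have hnorm_pert : ∀ c0 : ℝ, |c0| = t → ∀ n : ℕ, |x n| < δ →
            ‖y + c0 • en n‖ ≤ 1 := by
          intro c0 hc0 n hn
          rw [hnormeq]
          apply aux_lux_le _ _ one_pos
          have hι : ι (y + c0 • en n) = fun k => x k + (if k = n then c0 else 0) := by
            rw [map_add, map_smul]
            funext k
            simp [hen n, mul_ite, hxdef]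
          rw [hι]
          have hterm : ∀ k : ℕ,
              ENNReal.ofReal ((fun s => A * s ^ 4 + B * s ^ 2)
                (|x k + (if k = n then c0 else 0)| / 1))
              ≤ ENNReal.ofReal (A * |x k| ^ 4 + B * |x k| ^ 2)
                + (if k = n then ENNReal.ofReal (A * (t₀ + 2 * δ) ^ 4 + B * (t₀ + 2 * δ) ^ 2) else 0) := by
            intro k
            by_cases hk : k = n
            · subst hk
              rw [if_pos rfl, if_pos rfl]
              refine le_add_left ?_
              apply ENNReal.ofReal_le_ofReal
              simp only [div_one]
              apply aux_M_mono hA hB.le (abs_nonneg _)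
              calc |x k + c0| ≤ |x k| + |c0| := abs_add_le _ _
                _ ≤ δ + t := by rw [hc0]; linarith only [hn]
                _ = t₀ + 2 * δ := by rw [htdef]; ring
            · rw [if_neg hk, if_neg hk, add_zero, add_zero]
              apply ENNReal.ofReal_le_ofReal
              simp only [div_one]
              exact le_refl _
          calc ∑' k, ENNReal.ofReal ((fun s => A * s ^ 4 + B * s ^ 2)
                (|x k + (if k = n then c0 else 0)| / 1))
              ≤ ∑' k, (ENNReal.ofReal (A * |x k| ^ 4 + B * |x k| ^ 2)
                + (if k = n then ENNReal.ofReal (A * (t₀ + 2 * δ) ^ 4 + B * (t₀ + 2 * δ) ^ 2) else 0)) :=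
                ENNReal.tsum_le_tsum hterm
            _ = (∑' k, ENNReal.ofReal (A * |x k| ^ 4 + B * |x k| ^ 2))
                + ∑' k, (if k = n then ENNReal.ofReal (A * (t₀ + 2 * δ) ^ 4 + B * (t₀ + 2 * δ) ^ 2) else 0) :=
                ENNReal.tsum_add
            _ = ENNReal.ofReal T
                + ENNReal.ofReal (A * (t₀ + 2 * δ) ^ 4 + B * (t₀ + 2 * δ) ^ 2) := by
                rw [hTofReal, tsum_ite_eq]
            _ ≤ ENNReal.ofReal T + ENNReal.ofReal (A * t₀ ^ 4 + B * t₀ ^ 2 + η) :=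
                add_le_add_right (ENNReal.ofReal_le_ofReal hδb.le) _
            _ = ENNReal.ofReal (T + (A * t₀ ^ 4 + B * t₀ ^ 2 + η)) :=
                (ENNReal.ofReal_add hT0 (add_nonneg (by positivity) hη.le)).symm
            _ = ENNReal.ofReal 1 := by
                congr 1
                rw [hηdef]; ring
            _ = 1 := ENNReal.ofReal_one
        -- weak-star null sequences
        have hwι : ∀ n, ι (t • en n) = fun k => if k = n then t else 0 := by
          intro n
          rw [map_smul]
          funext k
          simp [hen n, mul_ite]
        have hwnull : ∀ z : X, Tendsto (fun n => (t • en n) z) atTop (𝓝 0) :=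
          fun z => aux_wstar_null A B C₂ hA hB hC2pos hc4 ι hnormeq htpos _ hwι z
        set u : ℕ → StrongDual ℝ X := fun n => y + t • en n with hudef
        set v : ℕ → StrongDual ℝ X := fun n => y + (-t) • en n with hvdef
        have htu : Tendsto (fun n => StrongDual.toWeakDual (u n)) atTop (𝓝 (StrongDual.toWeakDual y)) := by
          rw [tendsto_iff_forall_eval_tendsto_topDualPairing]
          intro z
          have h3 : Tendsto (fun n => (u n) z) atTop (𝓝 (y z)) := by
            have heq2 : (fun n => (u n) z) = fun n => y z + (t • en n) z := by
              funext n
              rw [hudef]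
              simp [ContinuousLinearMap.add_apply]
            rw [heq2]
            simpa using tendsto_const_nhds.add (hwnull z)
          exact h3
        have htv : Tendsto (fun n => StrongDual.toWeakDual (v n)) atTop (𝓝 (StrongDual.toWeakDual y)) := by
          rw [tendsto_iff_forall_eval_tendsto_topDualPairing]
          intro z
          have h3 : Tendsto (fun n => (v n) z) atTop (𝓝 (y z)) := by
            have heq2 : (fun n => (v n) z) = fun n => y z + (-((t • en n) z)) := by
              funext n
              rw [hvdef]
              simp [ContinuousLinearMap.add_apply]
            rw [heq2]
            have := (hwnull z).neg
            simpa using tendsto_const_nhds.add this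
          exact h3
        have hVnhds : StrongDual.toWeakDual '' V ∈ 𝓝 (StrongDual.toWeakDual y) :=
          (hV : IsOpen (StrongDual.toWeakDual '' V)).mem_nhds ⟨y, hyV, rfl⟩
        have hmemVu : ∀ᶠ n in atTop, u n ∈ V := by
          filter_upwards [htu.eventually_mem hVnhds] with n hn
          obtain ⟨f, hfV, hfe⟩ := hn
          rwa [← StrongDual.toWeakDual.injective hfe]
        have hmemVv : ∀ᶠ n in atTop, v n ∈ V := by
          filter_upwards [htv.eventually_mem hVnhds] with n hn
          obtain ⟨f, hfV, hfe⟩ := hn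
          rwa [← StrongDual.toWeakDual.injective hfe]
        have heventδ : ∀ᶠ n in atTop, |x n| < δ := by
          have hx20 : Tendsto (fun n => x n ^ 2) atTop (𝓝 0) := hsx.tendsto_atTop_zero
          have h1 : ∀ᶠ n in atTop, x n ^ 2 < δ ^ 2 :=
            hx20.eventually_lt_const (by positivity)
          filter_upwards [h1] with n hn
          nlinarith only [hn, hδpos, sq_abs (x n), abs_nonneg (x n)]
        obtain ⟨n, hn⟩ := ((hmemVu.and hmemVv).and heventδ).exists
        obtain ⟨⟨hnu, hnv⟩, hnδ⟩ := hn
        have hu1 : ‖u n‖ ≤ 1 := hnorm_pert t (abs_of_pos htpos) n hnδ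
        have hv1 : ‖v n‖ ≤ 1 := hnorm_pert (-t) (by rw [abs_neg, abs_of_pos htpos]) n hnδ
        have hdiff : u n - v n = (2 * t) • en n := by
          rw [hudef, hvdef]
          simp only
          module
        have hι2t : ι ((2 * t) • en n) = fun k => if k = n then 2 * t else 0 := by
          rw [map_smul]
          funext k
          simp [hen n, mul_ite]
        have hdistuv : dist (u n) (v n) = 2 * t * C₂ := by
          rw [dist_eq_norm, hdiff, hnormeq, hι2t,
            aux_lux_single A B C₂ hA hB hC2pos hc4 n (by positivity : (0:ℝ) < 2 * t)]
        have hdle : dist (u n) (v n) ≤ diam (closedBall (0 : StrongDual ℝ X) 1 ∩ V) := by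
          apply dist_le_diam_of_mem (Metric.isBounded_closedBall.subset Set.inter_subset_left)
          · exact ⟨mem_closedBall_zero_iff.mpr hu1, hnu⟩
          · exact ⟨mem_closedBall_zero_iff.mpr hv1, hnv⟩
        calc ε < 2 * t * C₂ := htgt
          _ = dist (u n) (v n) := hdistuv.symm
          _ ≤ diam (closedBall (0 : StrongDual ℝ X) 1 ∩ V) := hdle
      -- now conclude ρ ≤ sSup S
      have hbdd : BddAbove {r : ℝ | 0 < r ∧
          closedBall (0 : StrongDual ℝ X) r ⊆ szlenkDeriv ε (closedBall (0 : StrongDual ℝ X) 1)} := by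
        refine ⟨1, fun r hr => ?_⟩
        obtain ⟨hr0, hrsub⟩ := hr
        set f0 : StrongDual ℝ X := (r / C₂) • en 0 with hf0def
        have hf0norm : ‖f0‖ = r := by
          rw [hf0def, norm_smul, hennorm 0, Real.norm_eq_abs,
            abs_of_pos (by positivity : (0:ℝ) < r / C₂)]
          field_simp
        have hf0mem : f0 ∈ closedBall (0 : StrongDual ℝ X) r :=
          mem_closedBall_zero_iff.mpr hf0norm.le
        have := hrsub hf0mem
        simp only [szlenkDeriv, Set.mem_setOf_eq] at this
        have h1 := mem_closedBall_zero_iff.mp this.1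
        rw [hf0norm] at h1
        exact h1
      calc ρ = sSup (Set.Ioo (0:ℝ) ρ) := (csSup_Ioo hρpos).symm
        _ ≤ rX X ε := by
            apply csSup_le_csSup hbdd
              ⟨ρ/2, Set.mem_Ioo.mpr ⟨half_pos hρpos, half_lt_self hρpos⟩⟩
            intro r hr
            exact ⟨hr.1, hcore2 r hr.1 hr.2⟩
    · -- equality of square roots
      have h : C₁ ^ 2 / C₂ ^ 2 = 2 * B / (B + sq) := by
        rw [hC1sq, hC2sq, div_div_eq_mul_div, mul_comm]
      rw [hρdef, h]
end

section
/- Let B > 0 be fixed, and for A ≥ 0 let M_{A,B}(t) = A t⁴ + B t² and X_A = (ℓ_{M_{A,B}})*, so that X_A* = ℓ_{M_{A,B}}. Then for every ε ∈ (0,2), lim_{A→0⁺} r_{X_A}(ε) = lim_{A→0⁺} R_{X_A}(ε) = √(1 − ε²/4); that is, the ε-Szlenk derivations of the unit balls of ℓ_{M_{A,B}} approach the ball s_ε B_{ℓ₂} as A → 0⁺. -/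
open Metric Set Filter NormedSpace
open scoped NNReal ENNReal
open scoped Topology

section lux
variable {A B : ℝ} (hB : 0 < B) (hA : 0 ≤ A) {x : ℕ → ℝ}
include hB hA

/-- squares are summable for Orlicz elements -/
lemma summable_sq_of_memOrlicz (h : MemOrlicz (fun t => A * t ^ 4 + B * t ^ 2) x) :
    Summable (fun n => x n ^ 2) := by
  obtain ⟨l, hl, hfin⟩ := h
  have hle : ∀ n, ENNReal.ofReal (B * (x n / l) ^ 2) ≤
      ENNReal.ofReal (A * (|x n| / l) ^ 4 + B * (|x n| / l) ^ 2) := by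
    intro n
    apply ENNReal.ofReal_le_ofReal
    have h4 : (0:ℝ) ≤ A * (|x n| / l) ^ 4 := mul_nonneg hA (by positivity)
    have h5 : (|x n| / l) ^ 2 = (x n / l) ^ 2 := by
      rw [div_pow, div_pow, sq_abs]
    nlinarith
  have hfin2 : (∑' n, ENNReal.ofReal (B * (x n / l) ^ 2)) ≠ ⊤ :=
    (lt_of_le_of_lt (ENNReal.tsum_le_tsum hle) hfin).ne
  have hsum : Summable (fun n => (B * (x n / l) ^ 2).toNNReal) := by
    rw [← ENNReal.tsum_coe_ne_top_iff_summable]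
    simpa [ENNReal.ofReal] using hfin2
  have hsum2 : Summable (fun n => B * (x n / l) ^ 2) := by
    have := NNReal.summable_coe.2 hsum
    refine this.congr fun n => ?_
    rw [Real.coe_toNNReal _ (by positivity)]
  have := hsum2.mul_left (l ^ 2 / B)
  refine this.congr fun n => ?_
  have hl' : l ≠ 0 := hl.ne'
  have hB' : B ≠ 0 := hB.ne'
  field_simp

omit hB hA in
lemma summable_pow4 (h : Summable (fun n => x n ^ 2)) :
    Summable (fun n => x n ^ 4) := by
  refine Summable.of_nonneg_of_le (fun n => by positivity)
    (fun n => ?_) (h.mul_right (∑' n, x n ^ 2))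
  have h1 : x n ^ 2 ≤ ∑' m, x m ^ 2 := Summable.le_tsum h n (fun i _ => sq_nonneg _)
  have h2 : (0:ℝ) ≤ x n ^ 2 := sq_nonneg _
  nlinarith

omit hB hA in
lemma tsum_pow4_le (h : Summable (fun n => x n ^ 2)) :
    ∑' n, x n ^ 4 ≤ (∑' n, x n ^ 2) ^ 2 := by
  have h1 := h.mul_right (∑' n, x n ^ 2)
  calc ∑' n, x n ^ 4 ≤ ∑' n, (x n ^ 2 * ∑' m, x m ^ 2) := by
        refine Summable.tsum_le_tsum (fun n => ?_) (summable_pow4 h) h1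
        have h1 : x n ^ 2 ≤ ∑' m, x m ^ 2 := Summable.le_tsum h n (fun i _ => sq_nonneg _)
        nlinarith [sq_nonneg (x n)]
    _ = (∑' n, x n ^ 2) ^ 2 := by rw [tsum_mul_right]; ring

/-- the key membership: `l₀ = √(B+√A)·‖x‖₂` is in the Luxemburg set. -/
lemma lux_mem (h : Summable (fun n => x n ^ 2)) (hu : 0 < ∑' n, x n ^ 2) :
    Real.sqrt (B + Real.sqrt A) * Real.sqrt (∑' n, x n ^ 2) ∈
      {l : ℝ | 0 < l ∧ ∑' n, ENNReal.ofReal ((fun t => A * t ^ 4 + B * t ^ 2) (|x n| / l)) ≤ 1} := by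
  set u2 : ℝ := ∑' n, x n ^ 2 with hu2
  set l : ℝ := Real.sqrt (B + Real.sqrt A) * Real.sqrt u2 with hldef
  have hsA : 0 ≤ Real.sqrt A := Real.sqrt_nonneg A
  have hl : 0 < l := by
    apply mul_pos (Real.sqrt_pos.2 (by linarith)) (Real.sqrt_pos.2 hu)
  have hl2 : l ^ 2 = (B + Real.sqrt A) * u2 := by
    rw [hldef, mul_pow, Real.sq_sqrt (by linarith), Real.sq_sqrt hu.le]
  refine ⟨hl, ?_⟩
  have hterm : ∀ n, (fun t => A * t ^ 4 + B * t ^ 2) (|x n| / l)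
      = A * x n ^ 4 / l ^ 4 + B * x n ^ 2 / l ^ 2 := by
    intro n
    simp only [div_pow]
    rw [show |x n| ^ 4 = x n ^ 4 by
        rw [show (4:ℕ) = 2*2 from rfl, pow_mul, pow_mul, sq_abs],
      show |x n| ^ 2 = x n ^ 2 from sq_abs _]
    ring
  have hsum : Summable (fun n => A * x n ^ 4 / l ^ 4 + B * x n ^ 2 / l ^ 2) := by
    apply Summable.add
    · simpa [mul_div_assoc] using ((summable_pow4 h).div_const (l^4)).mul_left A
    · simpa [mul_div_assoc] using (h.div_const (l^2)).mul_left B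
  have hnn : ∀ n, (0:ℝ) ≤ A * x n ^ 4 / l ^ 4 + B * x n ^ 2 / l ^ 2 := by
    intro n
    have : (0:ℝ) ≤ A * x n ^ 4 := mul_nonneg hA (by positivity)
    positivity
  calc ∑' n, ENNReal.ofReal ((fun t => A * t ^ 4 + B * t ^ 2) (|x n| / l))
      = ENNReal.ofReal (∑' n, (A * x n ^ 4 / l ^ 4 + B * x n ^ 2 / l ^ 2)) := by
        rw [ENNReal.ofReal_tsum_of_nonneg hnn hsum]
        exact tsum_congr fun n => by rw [hterm n]
    _ ≤ 1 := by
        rw [show (1:ℝ≥0∞) = ENNReal.ofReal 1 by simp]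
        apply ENNReal.ofReal_le_ofReal
        have hts : ∑' n, (A * x n ^ 4 / l ^ 4 + B * x n ^ 2 / l ^ 2)
            = A * (∑' n, x n ^ 4) / l ^ 4 + B * u2 / l ^ 2 := by
          rw [Summable.tsum_add (by simpa [mul_div_assoc] using ((summable_pow4 h).div_const (l^4)).mul_left A)
            (by simpa [mul_div_assoc] using (h.div_const (l^2)).mul_left B)]
          rw [tsum_div_const, tsum_div_const, ← tsum_mul_left, ← tsum_mul_left]
        rw [hts]
        have h4 : A * (∑' n, x n ^ 4) ≤ A * u2 ^ 2 :=
          mul_le_mul_of_nonneg_left (tsum_pow4_le h) hA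
        have hl2pos : (0:ℝ) < l ^ 2 := by positivity
        have hl4 : l ^ 4 = ((B + Real.sqrt A) * u2) ^ 2 := by
          rw [show l^4 = (l^2)^2 by ring, hl2]
        have hBA : (0:ℝ) < B + Real.sqrt A := by linarith
        have hl4pos : (0:ℝ) < l ^ 4 := by positivity
        have key : A * u2 ^ 2 / l ^ 4 + B * u2 / l ^ 2 ≤ 1 := by
          rw [div_add_div _ _ (ne_of_gt hl4pos) (ne_of_gt hl2pos),
            div_le_one (by positivity), hl4, hl2]
          have hsq : Real.sqrt A ^ 2 = A := Real.sq_sqrt hA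
          have e : A * u2 ^ 2 * ((B + Real.sqrt A) * u2)
              = Real.sqrt A ^ 2 * u2 ^ 2 * ((B + Real.sqrt A) * u2) := by rw [hsq]
          nlinarith [e, mul_nonneg (mul_nonneg (mul_nonneg
            (pow_nonneg hu.le 3) hBA.le) hB.le) hsA]
        have : A * (∑' n, x n ^ 4) / l ^ 4 ≤ A * u2 ^ 2 / l ^ 4 :=
          (div_le_div_iff_of_pos_right hl4pos).mpr h4
        linarith

lemma lux_eq_zero_of (hx : ∀ n, x n = 0) :
    luxNorm (fun t => A * t ^ 4 + B * t ^ 2) x = 0 := by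
  unfold luxNorm
  have : {l : ℝ | 0 < l ∧ ∑' n, ENNReal.ofReal ((fun t => A * t ^ 4 + B * t ^ 2) (|x n| / l)) ≤ 1}
      = Ioi 0 := by
    ext l
    simp only [mem_setOf_eq, mem_Ioi, and_iff_left_iff_imp]
    intro _
    have : ∀ n : ℕ, ENNReal.ofReal ((fun t => A * t ^ 4 + B * t ^ 2) (|x n| / l)) = 0 := by
      intro n; simp [hx n]
    rw [tsum_congr this]
    simp
  rw [this, csInf_Ioi]

lemma lux_le (h : Summable (fun n => x n ^ 2)) :
    luxNorm (fun t => A * t ^ 4 + B * t ^ 2) x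
      ≤ Real.sqrt (B + Real.sqrt A) * Real.sqrt (∑' n, x n ^ 2) := by
  rcases eq_or_lt_of_le (tsum_nonneg (fun n => sq_nonneg (x n)) :
      (0:ℝ) ≤ ∑' n, x n ^ 2) with hu | hu
  · have hx : ∀ n, x n = 0 := by
      intro n
      have h1 : x n ^ 2 ≤ ∑' m, x m ^ 2 := Summable.le_tsum h n (fun i _ => sq_nonneg _)
      nlinarith [sq_nonneg (x n)]
    rw [lux_eq_zero_of hB hA hx, ← hu]
    simp
  · exact csInf_le ⟨0, fun l hl => hl.1.le⟩ (lux_mem hB hA h hu)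

lemma lux_ge (h : Summable (fun n => x n ^ 2)) :
    Real.sqrt B * Real.sqrt (∑' n, x n ^ 2)
      ≤ luxNorm (fun t => A * t ^ 4 + B * t ^ 2) x := by
  set u2 : ℝ := ∑' n, x n ^ 2 with hu2
  have hu2nn : 0 ≤ u2 := tsum_nonneg (fun n => sq_nonneg (x n))
  rcases eq_or_lt_of_le hu2nn with hu | hu
  · have : Real.sqrt B * Real.sqrt u2 = 0 := by rw [← hu]; simp
    rw [this]
    exact Real.sInf_nonneg (fun l hl => hl.1.le)
  · apply le_csInf ⟨_, lux_mem hB hA h hu⟩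
    rintro l ⟨hl, hle⟩
    -- from the constraint, B u2 / l² ≤ 1
    have hsumB : Summable (fun n => B * x n ^ 2 / l ^ 2) := by
      simpa [mul_div_assoc] using (h.div_const (l ^ 2)).mul_left B
    have hmono : ∑' n, ENNReal.ofReal (B * x n ^ 2 / l ^ 2) ≤ 1 := by
      refine le_trans (ENNReal.tsum_le_tsum fun n => ?_) hle
      apply ENNReal.ofReal_le_ofReal
      have h4 : (0:ℝ) ≤ A * (|x n| / l) ^ 4 := mul_nonneg hA (by positivity)
      have h5 : (|x n| / l) ^ 2 = x n ^ 2 / l ^ 2 := by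
        rw [div_pow, sq_abs]
      simp only []
      rw [h5]
      have e : B * (x n ^ 2 / l ^ 2) = B * x n ^ 2 / l ^ 2 := by ring
      linarith
    rw [← ENNReal.ofReal_tsum_of_nonneg (fun n => by positivity) hsumB] at hmono
    have hreal : ∑' n, (B * x n ^ 2 / l ^ 2) ≤ 1 := by
      exact_mod_cast ENNReal.ofReal_le_one.mp hmono
    have hts : ∑' n, (B * x n ^ 2 / l ^ 2) = B * u2 / l ^ 2 := by
      simp_rw [mul_div_assoc]
      rw [tsum_mul_left, tsum_div_const]
    rw [hts, div_le_one (by positivity)] at hreal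
    have : Real.sqrt B * Real.sqrt u2 = Real.sqrt (B * u2) := (Real.sqrt_mul hB.le _).symm
    rw [this]
    calc Real.sqrt (B * u2) ≤ Real.sqrt (l ^ 2) := Real.sqrt_le_sqrt hreal
      _ = l := Real.sqrt_sq hl.le

omit hB in
lemma memOrlicz_single (k : ℕ) (t : ℝ) :
    MemOrlicz (fun s => A * s ^ 4 + B * s ^ 2) (Pi.single k t) := by
  refine ⟨1, one_pos, ?_⟩
  have : ∀ n, n ≠ k →
      ENNReal.ofReal ((fun s => A * s ^ 4 + B * s ^ 2) (|(Pi.single k t : ℕ → ℝ) n| / 1)) = 0 := by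
    intro n hn
    rw [Pi.single_eq_of_ne hn]
    simp
  rw [tsum_eq_single k (fun n hn => this n hn)]
  exact ENNReal.ofReal_lt_top

end lux


section helpers

lemma tsum_sq_single (n : ℕ) (c : ℝ) :
    ∑' m, ((Pi.single n c : ℕ → ℝ) m) ^ 2 = c ^ 2 := by
  rw [tsum_eq_single n (fun m hm => by rw [Pi.single_eq_of_ne hm]; ring)]
  rw [Pi.single_eq_same]

lemma tendsto_zero_of_summable_sq {y : ℕ → ℝ} (hy : Summable fun m => y m ^ 2) :
    Tendsto y atTop (𝓝 0) := by
  have hsq0 := hy.tendsto_atTop_zero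
  rw [tendsto_zero_iff_abs_tendsto_zero]
  have h2 := (Real.continuous_sqrt.tendsto 0).comp hsq0
  rw [Real.sqrt_zero] at h2
  refine h2.congr fun k => ?_
  simp [Real.sqrt_sq_eq_abs]

lemma tsum_sq_add_single {y : ℕ → ℝ} (hy : Summable fun m => y m ^ 2) (n : ℕ) (c : ℝ) :
    Summable (fun m => (y m + (Pi.single n c : ℕ → ℝ) m) ^ 2) ∧
    ∑' m, (y m + (Pi.single n c : ℕ → ℝ) m) ^ 2
      = (∑' m, y m ^ 2) + (2 * c * y n + c ^ 2) := by
  set p : ℕ → ℝ := (Pi.single n c : ℕ → ℝ) with hp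
  set h : ℕ → ℝ := fun m => 2 * y m * p m + p m ^ 2 with hh
  have hsupp : ∀ m, m ≠ n → h m = 0 := by
    intro m hm
    simp [hh, hp, Pi.single_eq_of_ne hm]
  have hsummh : Summable h := by
    apply summable_of_ne_finset_zero (s := {n})
    intro m hm
    exact hsupp m (by simpa using hm)
  have hpt : ∀ m, (y m + p m) ^ 2 = y m ^ 2 + h m := by
    intro m
    simp only [hh]
    ring
  constructor
  · exact (hy.add hsummh).congr fun m => (hpt m).symm
  · calc ∑' m, (y m + p m) ^ 2 = ∑' m, (y m ^ 2 + h m) := tsum_congr hpt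
      _ = (∑' m, y m ^ 2) + ∑' m, h m := Summable.tsum_add hy hsummh
      _ = (∑' m, y m ^ 2) + (2 * c * y n + c ^ 2) := by
          rw [tsum_eq_single n (fun m hm => hsupp m hm)]
          simp only [hh, hp, Pi.single_eq_same]
          ring

lemma tsum_parallelogram {a b : ℕ → ℝ} (ha : Summable fun m => a m ^ 2)
    (hb : Summable fun m => b m ^ 2) :
    Summable (fun m => (a m - b m) ^ 2) ∧ Summable (fun m => (a m + b m) ^ 2) ∧
    (∑' m, (a m - b m) ^ 2) + (∑' m, (a m + b m) ^ 2)
      = 2 * (∑' m, a m ^ 2) + 2 * (∑' m, b m ^ 2) := by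
  have hs2 : Summable (fun m => 2 * a m ^ 2 + 2 * b m ^ 2) :=
    ((ha.mul_left 2).add (hb.mul_left 2))
  have hsub : Summable (fun m => (a m - b m) ^ 2) := by
    refine Summable.of_nonneg_of_le (fun m => sq_nonneg _) (fun m => ?_) hs2
    nlinarith [sq_nonneg (a m + b m)]
  have hadd : Summable (fun m => (a m + b m) ^ 2) := by
    refine Summable.of_nonneg_of_le (fun m => sq_nonneg _) (fun m => ?_) hs2
    nlinarith [sq_nonneg (a m - b m)]
  refine ⟨hsub, hadd, ?_⟩
  have : ∀ m, (a m - b m) ^ 2 + (a m + b m) ^ 2 = 2 * a m ^ 2 + 2 * b m ^ 2 := by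
    intro m; ring
  calc (∑' m, (a m - b m) ^ 2) + (∑' m, (a m + b m) ^ 2)
      = ∑' m, ((a m - b m) ^ 2 + (a m + b m) ^ 2) := (Summable.tsum_add hsub hadd).symm
    _ = ∑' m, (2 * a m ^ 2 + 2 * b m ^ 2) := tsum_congr this
    _ = 2 * (∑' m, a m ^ 2) + 2 * (∑' m, b m ^ 2) := by
        rw [Summable.tsum_add (ha.mul_left 2) (hb.mul_left 2), tsum_mul_left, tsum_mul_left]

end helpers

section dualfacts

variable {A B : ℝ} {X : Type*} [NormedAddCommGroup X] [NormedSpace ℝ X]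
variable (hB : 0 < B) (hA : 0 ≤ A) (ι : StrongDual ℝ X →ₗ[ℝ] (ℕ → ℝ))
variable (hrange : Set.range ι = {x : ℕ → ℝ | MemOrlicz (fun t => A * t ^ 4 + B * t ^ 2) x})
variable (hnormeq : ∀ y : StrongDual ℝ X, ‖y‖ = luxNorm (fun t => A * t ^ 4 + B * t ^ 2) (ι y))

include hB hA hrange in
lemma dual_sq_summable (y : StrongDual ℝ X) : Summable (fun n => ι y n ^ 2) := by
  have : ι y ∈ Set.range ι := Set.mem_range_self y
  rw [hrange] at this
  exact summable_sq_of_memOrlicz hB hA this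

include hB hA hrange hnormeq in
lemma dual_norm_ge (y : StrongDual ℝ X) :
    Real.sqrt B * Real.sqrt (∑' n, ι y n ^ 2) ≤ ‖y‖ := by
  rw [hnormeq y]
  exact lux_ge hB hA (dual_sq_summable hB hA ι hrange y)

include hB hA hrange hnormeq in
lemma dual_norm_le (y : StrongDual ℝ X) :
    ‖y‖ ≤ Real.sqrt (B + Real.sqrt A) * Real.sqrt (∑' n, ι y n ^ 2) := by
  rw [hnormeq y]
  exact lux_le hB hA (dual_sq_summable hB hA ι hrange y)

include hA hrange in
lemma exists_single_preimage (k : ℕ) (t : ℝ) : ∃ f : StrongDual ℝ X, ι f = Pi.single k t := by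
  have : Pi.single k t ∈ Set.range ι := by
    rw [hrange]
    exact memOrlicz_single hA k t
  exact this


include hB hA hrange hnormeq in
lemma eval_tendsto_zero (f : ℕ → StrongDual ℝ X) (t : ℝ) (ht : 0 < t)
    (hf : ∀ k, ι (f k) = Pi.single k t) (x : X) :
    Tendsto (fun k => f k x) atTop (𝓝 0) := by
  set a : ℕ → ℝ := fun k => f k x with ha
  set C : ℝ := Real.sqrt (B + Real.sqrt A) * t * ‖x‖ with hC
  have hCnn : 0 ≤ C := by positivity
  -- partial sums of squares are bounded
  have hbound : ∀ N : ℕ, ∑ k ∈ Finset.range N, a k ^ 2 ≤ C ^ 2 := by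
    intro N
    set g : StrongDual ℝ X := ∑ k ∈ Finset.range N, a k • f k with hg
    set S : ℝ := ∑ k ∈ Finset.range N, a k ^ 2 with hS
    have hSnn : 0 ≤ S := Finset.sum_nonneg fun k _ => sq_nonneg _
    have hgx : g x = S := by
      rw [hg, ContinuousLinearMap.sum_apply]
      refine Finset.sum_congr rfl fun k _ => ?_
      rw [ContinuousLinearMap.smul_apply, smul_eq_mul]
      show a k * a k = a k ^ 2
      ring
    have hιg : ∀ m, ι g m = if m ∈ Finset.range N then a m * t else 0 := by
      intro m
      rw [hg, map_sum]
      have e1 : ∀ k ∈ Finset.range N, ι (a k • f k) = a k • (Pi.single k t : ℕ → ℝ) := by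
        intro k _
        rw [map_smul, hf k]
      rw [Finset.sum_congr rfl e1, Finset.sum_apply]
      have : ∀ k, (a k • (Pi.single k t : ℕ → ℝ)) m = if m = k then a k * t else 0 := by
        intro k
        rw [Pi.smul_apply, Pi.single_apply]
        simp [smul_eq_mul, mul_ite]
      simp_rw [this]
      rw [Finset.sum_ite_eq (Finset.range N) m (fun k => a k * t)]
    have hsq : ∑' m, ι g m ^ 2 = t ^ 2 * S := by
      have hzero : ∀ m ∉ Finset.range N, ι g m ^ 2 = 0 := by
        intro m hm
        rw [hιg m, if_neg hm]
        ring
      rw [tsum_eq_sum hzero]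
      rw [hS, Finset.mul_sum]
      refine Finset.sum_congr rfl fun m hm => ?_
      rw [hιg m, if_pos hm]
      ring
    have hnormg : ‖g‖ ≤ Real.sqrt (B + Real.sqrt A) * (t * Real.sqrt S) := by
      refine (dual_norm_le hB hA ι hrange hnormeq g).trans ?_
      rw [hsq]
      have : Real.sqrt (t ^ 2 * S) = t * Real.sqrt S := by
        rw [Real.sqrt_mul (by positivity), Real.sqrt_sq ht.le]
      rw [this]
    have hSle : S ≤ C * Real.sqrt S := by
      calc S = g x := hgx.symm
        _ ≤ |g x| := le_abs_self _
        _ ≤ ‖g‖ * ‖x‖ := g.le_opNorm x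
        _ ≤ (Real.sqrt (B + Real.sqrt A) * (t * Real.sqrt S)) * ‖x‖ :=
            mul_le_mul_of_nonneg_right hnormg (norm_nonneg x)
        _ = C * Real.sqrt S := by rw [hC]; ring
    have hsqrtle : Real.sqrt S ≤ C := by
      by_contra hcon
      push_neg at hcon
      have h1 : 0 < Real.sqrt S := lt_of_le_of_lt hCnn hcon
      nlinarith [Real.sq_sqrt hSnn]
    calc S = Real.sqrt S ^ 2 := (Real.sq_sqrt hSnn).symm
      _ ≤ C ^ 2 := by nlinarith [Real.sqrt_nonneg S]
  have hsumm : Summable (fun k => a k ^ 2) :=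
    summable_of_sum_range_le (fun k => sq_nonneg _) hbound
  have hsq0 : Tendsto (fun k => a k ^ 2) atTop (𝓝 0) := hsumm.tendsto_atTop_zero
  rw [tendsto_zero_iff_abs_tendsto_zero]
  have h2 := (Real.continuous_sqrt.tendsto 0).comp hsq0
  rw [Real.sqrt_zero] at h2
  refine h2.congr fun k => ?_
  simp [Real.sqrt_sq_eq_abs]


set_option maxHeartbeats 1000000 in
include hB hA hrange hnormeq in
lemma ball_subset_szlenkDeriv (ε r : ℝ) (hε0 : 0 < ε) (hr : 0 < r)
    (hr2 : r ^ 2 < B / (B + Real.sqrt A) - ε ^ 2 / 4) :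
    closedBall (0 : StrongDual ℝ X) r ⊆ szlenkDeriv ε (closedBall (0 : StrongDual ℝ X) 1) := by
  have hsA : 0 ≤ Real.sqrt A := Real.sqrt_nonneg A
  have hBA : 0 < B + Real.sqrt A := by linarith
  intro x' hx'
  rw [mem_closedBall_zero_iff] at hx'
  have hr1 : r < 1 := by
    have h1 : B / (B + Real.sqrt A) ≤ 1 := by
      rw [div_le_one hBA]; linarith
    nlinarith
  constructor
  · rw [mem_closedBall_zero_iff]
    linarith
  intro V hV hxV
  -- the parameters
  set D : ℝ := B / (B + Real.sqrt A) - ε ^ 2 / 4 - r ^ 2 with hD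
  have hDpos : 0 < D := by rw [hD]; linarith
  set t : ℝ := Real.sqrt ((ε ^ 2 / 4 + D / 2) / B) with htdef
  have ht : 0 < t := Real.sqrt_pos.2 (by positivity)
  have hBt2 : B * t ^ 2 = ε ^ 2 / 4 + D / 2 := by
    rw [htdef, Real.sq_sqrt (by positivity)]
    field_simp
  -- the perturbing sequence
  choose f hf using fun k : ℕ => exists_single_preimage hA ι hrange k t
  have htend := eval_tendsto_zero hB hA ι hrange hnormeq f t ht hf
  -- weak-star convergence of `x' ± f n` to `x'`
  have hwplus : Tendsto (fun n => StrongDual.toWeakDual (x' + f n)) atTop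
      (𝓝 (StrongDual.toWeakDual x')) := by
    rw [tendsto_iff_forall_eval_tendsto_topDualPairing]
    intro z
    have : ∀ n, topDualPairing ℝ X (StrongDual.toWeakDual (x' + f n)) z = x' z + f n z := by
      intro n; rfl
    simp_rw [this]
    have h0 : topDualPairing ℝ X (StrongDual.toWeakDual x') z = x' z + 0 := by
      simp; rfl
    rw [h0]
    exact tendsto_const_nhds.add (htend z)
  have hwminus : Tendsto (fun n => StrongDual.toWeakDual (x' - f n)) atTop
      (𝓝 (StrongDual.toWeakDual x')) := by
    rw [tendsto_iff_forall_eval_tendsto_topDualPairing]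
    intro z
    have : ∀ n, topDualPairing ℝ X (StrongDual.toWeakDual (x' - f n)) z = x' z - f n z := by
      intro n; rfl
    simp_rw [this]
    have h0 : topDualPairing ℝ X (StrongDual.toWeakDual x') z = x' z - 0 := by
      simp; rfl
    rw [h0]
    exact tendsto_const_nhds.sub (htend z)
  have hmemV : StrongDual.toWeakDual x' ∈ StrongDual.toWeakDual '' V := mem_image_of_mem _ hxV
  have hplusV : ∀ᶠ n in atTop, (x' + f n) ∈ V := by
    filter_upwards [hwplus (hV.mem_nhds hmemV)] with n hn
    obtain ⟨v, hvV, hveq⟩ := hn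
    rwa [← StrongDual.toWeakDual.injective hveq]
  have hminusV : ∀ᶠ n in atTop, (x' - f n) ∈ V := by
    filter_upwards [hwminus (hV.mem_nhds hmemV)] with n hn
    obtain ⟨v, hvV, hveq⟩ := hn
    rwa [← StrongDual.toWeakDual.injective hveq]
  -- norm control
  set u2 : ℝ := ∑' m, ι x' m ^ 2 with hu2
  have hsumx : Summable fun m => ι x' m ^ 2 := dual_sq_summable hB hA ι hrange x'
  have hu2nn : 0 ≤ u2 := tsum_nonneg fun m => sq_nonneg _
  have hu2le : u2 ≤ r ^ 2 / B := by
    have h1 := dual_norm_ge hB hA ι hrange hnormeq x'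
    have h2 : Real.sqrt B * Real.sqrt u2 ≤ r := le_trans h1 hx'
    have h3 : Real.sqrt B * Real.sqrt u2 = Real.sqrt (B * u2) :=
      (Real.sqrt_mul hB.le _).symm
    rw [h3] at h2
    have h4 : B * u2 ≤ r ^ 2 := by
      nlinarith [Real.sq_sqrt (mul_nonneg hB.le hu2nn), Real.sqrt_nonneg (B * u2)]
    rw [le_div_iff₀ hB]
    linarith
  set η : ℝ := 1 / (B + Real.sqrt A) - (r ^ 2 / B + t ^ 2) with hη
  have hηpos : 0 < η := by
    have h1 : r ^ 2 + B * t ^ 2 = B / (B + Real.sqrt A) - D / 2 := by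
      rw [hBt2, hD]; ring
    have key : r ^ 2 / B + t ^ 2 = 1 / (B + Real.sqrt A) - D / (2 * B) := by
      calc r ^ 2 / B + t ^ 2 = (r ^ 2 + B * t ^ 2) / B := by
            field_simp
          _ = (B / (B + Real.sqrt A) - D / 2) / B := by rw [h1]
          _ = 1 / (B + Real.sqrt A) - D / (2 * B) := by
            field_simp
    rw [hη, key]
    have : 0 < D / (2 * B) := by positivity
    linarith
  have hsmall : ∀ᶠ n in atTop, |2 * t * ι x' n| < η := by
    have hx0 : Tendsto (fun n => ι x' n) atTop (𝓝 0) := tendsto_zero_of_summable_sq hsumx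
    have := (hx0.const_mul (2 * t)).abs
    rw [mul_zero, abs_zero] at this
    exact this.eventually_lt_const hηpos
  obtain ⟨n, hnp, hnm, hns⟩ := (hplusV.and (hminusV.and hsmall)).exists
  -- the two perturbed points lie in the unit ball
  have hιp : ι (x' + f n) = fun m => ι x' m + (Pi.single n t : ℕ → ℝ) m := by
    funext m
    rw [map_add, hf n]; rfl
  have hιm : ι (x' - f n) = fun m => ι x' m + (Pi.single n (-t) : ℕ → ℝ) m := by
    funext m
    rw [map_sub, hf n]
    by_cases hm : m = n
    · subst hm; simp [sub_eq_add_neg]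
    · simp [Pi.single_eq_of_ne hm]
  have hnormbound : ∀ (y : StrongDual ℝ X) (c : ℝ), c ^ 2 = t ^ 2 →
      ι y = (fun m => ι x' m + (Pi.single n c : ℕ → ℝ) m) →
      (2 * c * ι x' n ≤ |2 * t * ι x' n|) → ‖y‖ ≤ 1 := by
    intro y c hc2 hy hcabs
    obtain ⟨hsum2, htsum2⟩ := tsum_sq_add_single hsumx n c
    have h1 : ∑' m, ι y m ^ 2 = u2 + (2 * c * ι x' n + c ^ 2) := by
      rw [hy]; exact htsum2
    have h2 : ∑' m, ι y m ^ 2 ≤ 1 / (B + Real.sqrt A) := by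
      rw [h1, hc2]
      have h8 : 2 * c * ι x' n ≤ η := le_trans hcabs hns.le
      have h9 : u2 + (2 * c * ι x' n + t ^ 2) ≤ r ^ 2 / B + t ^ 2 + η := by
        have h10 : u2 ≤ r ^ 2 / B := hu2le
        calc u2 + (2 * c * ι x' n + t ^ 2) ≤ r ^ 2 / B + (η + t ^ 2) :=
              add_le_add h10 (add_le_add_left h8 _)
          _ = r ^ 2 / B + t ^ 2 + η := by ring
      linarith [h9, hηpos, (by rw [hη]; ring : r ^ 2 / B + t ^ 2 + η = 1 / (B + Real.sqrt A))]
    calc ‖y‖ ≤ Real.sqrt (B + Real.sqrt A) * Real.sqrt (∑' m, ι y m ^ 2) :=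
          dual_norm_le hB hA ι hrange hnormeq y
      _ ≤ Real.sqrt (B + Real.sqrt A) * Real.sqrt (1 / (B + Real.sqrt A)) := by
          have := Real.sqrt_le_sqrt h2
          exact mul_le_mul_of_nonneg_left this (Real.sqrt_nonneg _)
      _ = 1 := by
          rw [← Real.sqrt_mul hBA.le, mul_one_div, div_self hBA.ne']
          exact Real.sqrt_one
  have hyp : ‖x' + f n‖ ≤ 1 :=
    hnormbound _ t rfl hιp (le_trans (le_abs_self _) (le_refl _))
  have hym : ‖x' - f n‖ ≤ 1 := by
    refine hnormbound _ (-t) (by ring) hιm ?_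
    have : 2 * (-t) * ι x' n = -(2 * t * ι x' n) := by ring
    rw [this]
    exact neg_le_abs _
  -- distance between the two points
  have hdist : ε < dist (x' + f n) (x' - f n) := by
    rw [dist_eq_norm]
    have hsub : (x' + f n) - (x' - f n) = f n + f n := by abel
    have hιsub : ι ((x' + f n) - (x' - f n)) = (Pi.single n (2 * t) : ℕ → ℝ) := by
      rw [hsub, map_add, hf n]
      funext m
      by_cases hm : m = n
      · subst hm; simp; ring
      · simp [Pi.single_eq_of_ne hm]
    have h1 := dual_norm_ge hB hA ι hrange hnormeq ((x' + f n) - (x' - f n))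
    rw [hιsub] at h1
    rw [tsum_sq_single n (2 * t)] at h1
    have h2 : Real.sqrt ((2 * t) ^ 2) = 2 * t := Real.sqrt_sq (by positivity)
    rw [h2] at h1
    have h3 : ε < Real.sqrt B * (2 * t) := by
      have hsq : (Real.sqrt B * (2 * t)) ^ 2 = 4 * (B * t ^ 2) := by
        rw [mul_pow, Real.sq_sqrt hB.le]; ring
      have h4 : ε ^ 2 < (Real.sqrt B * (2 * t)) ^ 2 := by
        rw [hsq, hBt2]; nlinarith
      nlinarith [mul_pos (Real.sqrt_pos.2 hB) (by positivity : (0:ℝ) < 2 * t), hε0]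
    linarith
  have hbdd : Bornology.IsBounded (closedBall (0 : StrongDual ℝ X) 1 ∩ V) :=
    (isBounded_closedBall).subset inter_subset_left
  calc ε < dist (x' + f n) (x' - f n) := hdist
    _ ≤ diam (closedBall (0 : StrongDual ℝ X) 1 ∩ V) := by
        apply dist_le_diam_of_mem hbdd
        · exact ⟨mem_closedBall_zero_iff.2 hyp, hnp⟩
        · exact ⟨mem_closedBall_zero_iff.2 hym, hnm⟩


set_option maxHeartbeats 1000000 in
include hB hA hrange hnormeq in
lemma szlenkDeriv_subset_ball (ε : ℝ) (hε0 : 0 < ε) (hε2 : ε < 2) :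
    szlenkDeriv ε (closedBall (0 : StrongDual ℝ X) 1) ⊆
      closedBall (0 : StrongDual ℝ X)
        (Real.sqrt ((B + Real.sqrt A) / B - ε ^ 2 / 4)) := by
  have hsA : 0 ≤ Real.sqrt A := Real.sqrt_nonneg A
  have hBA : 0 < B + Real.sqrt A := by linarith
  set Q : ℝ := (B + Real.sqrt A) / B - ε ^ 2 / 4 with hQ
  have hQ1 : 1 ≤ (B + Real.sqrt A) / B := by
    rw [le_div_iff₀ hB]; linarith
  have hQpos : 0 < Q := by rw [hQ]; nlinarith
  intro x' hx'
  rw [mem_closedBall_zero_iff]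
  by_contra hcon
  push_neg at hcon
  have hsqQ : 0 < Real.sqrt Q := Real.sqrt_pos.2 hQpos
  set s : ℝ := (Real.sqrt Q + ‖x'‖) / 2 with hs
  have hs1 : Real.sqrt Q < s := by rw [hs]; linarith
  have hs2 : s < ‖x'‖ := by rw [hs]; linarith
  have hspos : 0 < s := lt_trans hsqQ hs1
  -- a nearly norming functional
  obtain ⟨z, hz1, hz2⟩ : ∃ z : X, ‖z‖ ≤ 1 ∧ s < x' z := by
    by_contra hno
    push_neg at hno
    have : ‖x'‖ ≤ s := by
      apply ContinuousLinearMap.opNorm_le_bound _ hspos.le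
      intro w
      rcases eq_or_ne w 0 with rfl | hw
      · simp
      · have hwn : 0 < ‖w‖ := norm_pos_iff.2 hw
        have e1 : ‖(‖w‖⁻¹ • w : X)‖ ≤ 1 := by
          rw [norm_smul, norm_inv, norm_norm, inv_mul_cancel₀ hwn.ne']
        have e2 := hno _ e1
        have e3 := hno (-(‖w‖⁻¹ • w)) (by rwa [norm_neg])
        rw [map_neg] at e3
        have e4 : |x' (‖w‖⁻¹ • w)| ≤ s := abs_le.2 ⟨by linarith, e2⟩
        have e5 : x' (‖w‖⁻¹ • w) = ‖w‖⁻¹ * x' w := by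
          rw [map_smul]; rfl
        rw [e5, abs_mul, abs_inv, abs_norm] at e4
        have : ‖x' w‖ = |x' w| := rfl
        rw [this]
        calc |x' w| = ‖w‖ * (‖w‖⁻¹ * |x' w|) := by field_simp
          _ ≤ ‖w‖ * s := mul_le_mul_of_nonneg_left e4 hwn.le
          _ = s * ‖w‖ := by ring
    linarith
  -- the weak-star open slice
  set V : Set (StrongDual ℝ X) := {y : StrongDual ℝ X | s < y z} with hV
  have hVopen : IsWeakStarOpen V := by
    unfold IsWeakStarOpen
    have himg : StrongDual.toWeakDual '' V = {w : WeakDual ℝ X | s < w z} := by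
      ext w
      constructor
      · rintro ⟨v, hv, rfl⟩
        exact hv
      · intro hw
        exact ⟨StrongDual.toWeakDual.symm w, hw, by simp⟩
    rw [himg]
    exact isOpen_lt continuous_const (WeakDual.eval_continuous z)
  have hdiam := hx'.2 V hVopen hz2
  have hdle : diam (closedBall (0 : StrongDual ℝ X) 1 ∩ V) ≤ ε := by
    apply diam_le_of_forall_dist_le hε0.le
    rintro y ⟨hy1, hy2⟩ w ⟨hw1, hw2⟩
    rw [mem_closedBall_zero_iff] at hy1 hw1
    rw [dist_eq_norm]
    set a : ℕ → ℝ := ι y with ha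
    set b : ℕ → ℝ := ι w with hb
    have hsa : Summable fun m => a m ^ 2 := dual_sq_summable hB hA ι hrange y
    have hsb : Summable fun m => b m ^ 2 := dual_sq_summable hB hA ι hrange w
    obtain ⟨hsub, hadd, hpar⟩ := tsum_parallelogram hsa hsb
    -- upper bounds for ∑ a², ∑ b²
    have hA2 : ∀ (v : StrongDual ℝ X), ‖v‖ ≤ 1 → ∑' m, ι v m ^ 2 ≤ 1 / B := by
      intro v hv
      have h1 := dual_norm_ge hB hA ι hrange hnormeq v
      have h2 : Real.sqrt (B * ∑' m, ι v m ^ 2) ≤ 1 := by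
        rw [Real.sqrt_mul hB.le]
        linarith
      have h3 : B * ∑' m, ι v m ^ 2 ≤ 1 := by
        nlinarith [Real.sq_sqrt (mul_nonneg hB.le
          (tsum_nonneg (fun m => sq_nonneg (ι v m)) : (0:ℝ) ≤ ∑' m, ι v m ^ 2)),
          Real.sqrt_nonneg (B * ∑' m, ι v m ^ 2)]
      rw [le_div_iff₀ hB]
      linarith
    have hAa : ∑' m, a m ^ 2 ≤ 1 / B := hA2 y hy1
    have hAb : ∑' m, b m ^ 2 ≤ 1 / B := hA2 w hw1
    -- lower bound for ∑ (a+b)²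
    have hmid : 4 * s ^ 2 / (B + Real.sqrt A) ≤ ∑' m, (a m + b m) ^ 2 := by
      have hyw : 2 * s < ‖y + w‖ := by
        have h1 : s < y z := hy2
        have h2 : s < w z := hw2
        have h3 : (y + w) z = y z + w z := rfl
        have h4 : (y + w) z ≤ |(y + w) z| := le_abs_self _
        have h5 : |(y + w) z| ≤ ‖y + w‖ * ‖z‖ := (y + w).le_opNorm z
        have h6 : ‖y + w‖ * ‖z‖ ≤ ‖y + w‖ * 1 :=
          mul_le_mul_of_nonneg_left hz1 (norm_nonneg _)
        calc 2 * s < y z + w z := by linarith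
          _ = (y + w) z := h3.symm
          _ ≤ ‖y + w‖ := by linarith [h4, h5, h6]
      have h7 := dual_norm_le hB hA ι hrange hnormeq (y + w)
      have hιyw : ι (y + w) = fun m => a m + b m := by
        funext m
        rw [map_add]; rfl
      rw [hιyw] at h7
      have h8 : 2 * s < Real.sqrt (B + Real.sqrt A) * Real.sqrt (∑' m, (a m + b m) ^ 2) :=
        lt_of_lt_of_le hyw h7
      have h9 : (Real.sqrt (B + Real.sqrt A) * Real.sqrt (∑' m, (a m + b m) ^ 2)) ^ 2
          = (B + Real.sqrt A) * ∑' m, (a m + b m) ^ 2 := by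
        rw [mul_pow, Real.sq_sqrt hBA.le,
          Real.sq_sqrt (tsum_nonneg (fun m => sq_nonneg _))]
      have h10 : 4 * s ^ 2 < (B + Real.sqrt A) * ∑' m, (a m + b m) ^ 2 := by
        nlinarith [hspos]
      rw [div_le_iff₀ hBA]
      nlinarith
    -- putting it together
    have hsubb : ∑' m, (a m - b m) ^ 2 ≤ 4 / B - 4 * s ^ 2 / (B + Real.sqrt A) := by
      have e1 : ∑' m, (a m - b m) ^ 2
          = 2 * (∑' m, a m ^ 2) + 2 * (∑' m, b m ^ 2) - ∑' m, (a m + b m) ^ 2 :=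
        eq_sub_of_add_eq hpar
      have e2 : 2 * (∑' m, a m ^ 2) + 2 * (∑' m, b m ^ 2) - ∑' m, (a m + b m) ^ 2
          ≤ (2 * (1 / B) + 2 * (1 / B)) - 4 * s ^ 2 / (B + Real.sqrt A) :=
        sub_le_sub (add_le_add
          (mul_le_mul_of_nonneg_left hAa (by norm_num))
          (mul_le_mul_of_nonneg_left hAb (by norm_num))) hmid
      rw [e1]
      refine e2.trans (le_of_eq ?_)
      ring
    have h11 := dual_norm_le hB hA ι hrange hnormeq (y - w)
    have hιyw : ι (y - w) = fun m => a m - b m := by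
      funext m
      rw [map_sub]; rfl
    rw [hιyw] at h11
    have h12 : ‖y - w‖ ^ 2 ≤ (B + Real.sqrt A) * ∑' m, (a m - b m) ^ 2 := by
      have h13 : (Real.sqrt (B + Real.sqrt A) * Real.sqrt (∑' m, (a m - b m) ^ 2)) ^ 2
          = (B + Real.sqrt A) * ∑' m, (a m - b m) ^ 2 := by
        rw [mul_pow, Real.sq_sqrt hBA.le,
          Real.sq_sqrt (tsum_nonneg (fun m => sq_nonneg _))]
      nlinarith [norm_nonneg (y - w), Real.sqrt_nonneg (B + Real.sqrt A),
        Real.sqrt_nonneg (∑' m, (a m - b m) ^ 2)]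
    have h14 : ‖y - w‖ ^ 2 ≤ 4 * ((B + Real.sqrt A) / B) - 4 * s ^ 2 := by
      have h15 : (B + Real.sqrt A) * (4 / B - 4 * s ^ 2 / (B + Real.sqrt A))
          = 4 * ((B + Real.sqrt A) / B) - 4 * s ^ 2 := by
        field_simp
      nlinarith [hsubb]
    -- since s² > Q = (B+√A)/B − ε²/4 we get ‖y − w‖² < ε²
    have hs2Q : Q < s ^ 2 := by
      nlinarith [Real.sq_sqrt hQpos.le]
    have h16 : ‖y - w‖ ^ 2 < ε ^ 2 := by
      have : 4 * ((B + Real.sqrt A) / B) - 4 * s ^ 2 < ε ^ 2 := by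
        rw [hQ] at hs2Q
        nlinarith
      linarith
    nlinarith [norm_nonneg (y - w)]
  linarith

include hB hA hrange in
lemma szlenk_r_le_R (r R : ℝ) (hr : 0 < r)
    (hrsub : closedBall (0 : StrongDual ℝ X) r ⊆ szlenkDeriv (ε := ε) (closedBall (0 : StrongDual ℝ X) 1))
    (hRsub : szlenkDeriv ε (closedBall (0 : StrongDual ℝ X) 1) ⊆ closedBall (0 : StrongDual ℝ X) R) :
    r ≤ R := by
  obtain ⟨f, hf⟩ := exists_single_preimage hA ι hrange 0 1
  have hfnorm : 0 < ‖f‖ := by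
    rw [norm_pos_iff]
    intro hf0
    rw [hf0, map_zero] at hf
    have := congrFun hf 0
    simp at this
  set g : StrongDual ℝ X := (r / ‖f‖) • f with hg
  have hgnorm : ‖g‖ = r := by
    rw [hg, norm_smul, norm_div, Real.norm_eq_abs, abs_of_pos hr, norm_norm,
      div_mul_cancel₀ _ hfnorm.ne']
  have hgmem : g ∈ closedBall (0 : StrongDual ℝ X) r := by
    rw [mem_closedBall_zero_iff, hgnorm]
  have := hRsub (hrsub hgmem)
  rw [mem_closedBall_zero_iff, hgnorm] at this
  exact this

end dualfacts

/-- Example, stability: for a family `X A = (ℓ_{M_{A,B}})*`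
(`A ≥ 0`, `B > 0` fixed), the radii `r_{X A}(ε)` and `R_{X A}(ε)` both tend to
`√(1 - ε²/4)` as `A → 0⁺`. -/
theorem rX_RX_tendsto_orlicz_quartic_quadratic
    (B : ℝ) (hB : 0 < B)
    -- for each `A`, `X A` is a Banach space whose dual is (identified with)
    -- `ℓ_{M_{A,B}}` carrying the Luxemburg norm
    (X : ℝ → Type*) [∀ A, NormedAddCommGroup (X A)] [∀ A, NormedSpace ℝ (X A)]
    [∀ A, CompleteSpace (X A)]
    (ι : ∀ A, StrongDual ℝ (X A) →ₗ[ℝ] (ℕ → ℝ))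
    (hinj : ∀ A : ℝ, 0 ≤ A → Function.Injective (ι A))
    (hrange : ∀ A : ℝ, 0 ≤ A →
      Set.range (ι A) = {x : ℕ → ℝ | MemOrlicz (fun t => A * t ^ 4 + B * t ^ 2) x})
    (hnormeq : ∀ A : ℝ, 0 ≤ A → ∀ y : StrongDual ℝ (X A),
      ‖y‖ = luxNorm (fun t => A * t ^ 4 + B * t ^ 2) ((ι A) y))
    (ε : ℝ) (hε0 : 0 < ε) (hε2 : ε < 2) :
    Tendsto (fun A => rX (X A) ε) (nhdsWithin 0 (Ioi 0))
      (nhds (Real.sqrt (1 - ε ^ 2 / 4))) ∧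
    Tendsto (fun A => RX (X A) ε) (nhdsWithin 0 (Ioi 0))
      (nhds (Real.sqrt (1 - ε ^ 2 / 4))) := by
  have hL0 : (0:ℝ) < 1 - ε ^ 2 / 4 := by nlinarith
  set L : ℝ := Real.sqrt (1 - ε ^ 2 / 4) with hL
  -- the two bounding functions
  set lo : ℝ → ℝ := fun A => Real.sqrt (B / (B + Real.sqrt A) - ε ^ 2 / 4) with hlo
  set hi : ℝ → ℝ := fun A => Real.sqrt ((B + Real.sqrt A) / B - ε ^ 2 / 4) with hhi
  -- continuity of the bounding functions at 0
  have hcont1 : ContinuousAt (fun A : ℝ => B / (B + Real.sqrt A) - ε ^ 2 / 4) 0 := by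
    apply ContinuousAt.sub _ continuousAt_const
    apply ContinuousAt.div continuousAt_const
      (continuousAt_const.add Real.continuous_sqrt.continuousAt)
    simp [Real.sqrt_zero]
    exact hB.ne'
  have hcont2 : ContinuousAt (fun A : ℝ => (B + Real.sqrt A) / B - ε ^ 2 / 4) 0 := by
    apply ContinuousAt.sub _ continuousAt_const
    exact (continuousAt_const.add Real.continuous_sqrt.continuousAt).div
      continuousAt_const hB.ne'
  have hP1 : Tendsto (fun A : ℝ => B / (B + Real.sqrt A) - ε ^ 2 / 4)
      (nhdsWithin 0 (Ioi 0)) (nhds (1 - ε ^ 2 / 4)) := by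
    have := hcont1.tendsto
    rw [show B / (B + Real.sqrt 0) - ε ^ 2 / 4 = 1 - ε ^ 2 / 4 by
      rw [Real.sqrt_zero, add_zero, div_self hB.ne']] at this
    exact this.mono_left nhdsWithin_le_nhds
  have hP2 : Tendsto (fun A : ℝ => (B + Real.sqrt A) / B - ε ^ 2 / 4)
      (nhdsWithin 0 (Ioi 0)) (nhds (1 - ε ^ 2 / 4)) := by
    have := hcont2.tendsto
    rw [show (B + Real.sqrt 0) / B - ε ^ 2 / 4 = 1 - ε ^ 2 / 4 by
      rw [Real.sqrt_zero, add_zero, div_self hB.ne']] at this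
    exact this.mono_left nhdsWithin_le_nhds
  have hlot : Tendsto lo (nhdsWithin 0 (Ioi 0)) (nhds L) :=
    (Real.continuous_sqrt.continuousAt.tendsto).comp hP1
  have hhit : Tendsto hi (nhdsWithin 0 (Ioi 0)) (nhds L) :=
    (Real.continuous_sqrt.continuousAt.tendsto).comp hP2
  -- the eventual bounds
  have hevA : ∀ᶠ A in nhdsWithin (0:ℝ) (Ioi 0), 0 < A :=
    eventually_mem_nhdsWithin
  have hevP : ∀ᶠ A in nhdsWithin (0:ℝ) (Ioi 0),
      0 < B / (B + Real.sqrt A) - ε ^ 2 / 4 :=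
    hP1.eventually (eventually_gt_nhds hL0)
  have hbounds : ∀ᶠ A in nhdsWithin (0:ℝ) (Ioi 0),
      lo A ≤ rX (X A) ε ∧ rX (X A) ε ≤ RX (X A) ε ∧ RX (X A) ε ≤ hi A := by
    filter_upwards [hevA, hevP] with A hA hPA
    have hA' : (0:ℝ) ≤ A := hA.le
    have hsA : 0 ≤ Real.sqrt A := Real.sqrt_nonneg A
    have hBA : 0 < B + Real.sqrt A := by linarith
    set K : Set (StrongDual ℝ (X A)) := closedBall 0 1 with hK
    set sz : Set (StrongDual ℝ (X A)) := szlenkDeriv ε K with hsz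
    set Sr : Set ℝ := {r : ℝ | 0 < r ∧ closedBall (0 : StrongDual ℝ (X A)) r ⊆ sz} with hSr
    set SR : Set ℝ := {R : ℝ | 0 < R ∧ sz ⊆ closedBall (0 : StrongDual ℝ (X A)) R} with hSR
    have hrXeq : rX (X A) ε = sSup Sr := rfl
    have hRXeq : RX (X A) ε = sInf SR := rfl
    have hone : (1:ℝ) ∈ SR := ⟨one_pos, fun x hx => hx.1⟩
    have hloA : 0 < lo A := Real.sqrt_pos.2 hPA
    have hlosq : lo A ^ 2 = B / (B + Real.sqrt A) - ε ^ 2 / 4 := Real.sq_sqrt hPA.le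
    have hmemSr : ∀ r : ℝ, 0 < r → r < lo A → r ∈ Sr := by
      intro r h1 h2
      refine ⟨h1, ?_⟩
      apply ball_subset_szlenkDeriv hB hA' (ι A) (hrange A hA') (hnormeq A hA') ε r hε0 h1
      have : r ^ 2 < lo A ^ 2 := by nlinarith
      rwa [hlosq] at this
    have hbdd : BddAbove Sr := by
      refine ⟨1, fun r hr => ?_⟩
      exact szlenk_r_le_R hB hA' (ι A) (hrange A hA') r 1 hr.1 hr.2 hone.2
    have hne : Sr.Nonempty := ⟨lo A / 2, hmemSr _ (by linarith) (by linarith)⟩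
    refine ⟨?_, ?_, ?_⟩
    · -- lo A ≤ rX
      rw [hrXeq]
      apply le_of_forall_lt
      intro c hc
      rcases lt_or_ge c (lo A / 2) with h | h
      · exact lt_of_lt_of_le h (le_csSup hbdd (hmemSr _ (by linarith) (by linarith)))
      · have h1 : 0 < (c + lo A) / 2 := by linarith
        have h2 : (c + lo A) / 2 < lo A := by linarith
        calc c < (c + lo A) / 2 := by linarith
          _ ≤ sSup Sr := le_csSup hbdd (hmemSr _ h1 h2)
    · -- rX ≤ RX
      rw [hrXeq, hRXeq]
      apply csSup_le hne
      intro r hr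
      apply le_csInf ⟨1, hone⟩
      intro R hR
      exact szlenk_r_le_R hB hA' (ι A) (hrange A hA') r R hr.1 hr.2 hR.2
    · -- RX ≤ hi A
      rw [hRXeq]
      have hQpos : 0 < (B + Real.sqrt A) / B - ε ^ 2 / 4 := by
        have : 1 ≤ (B + Real.sqrt A) / B := by
          rw [le_div_iff₀ hB]; linarith
        nlinarith
      have hhiA : 0 < hi A := Real.sqrt_pos.2 hQpos
      apply csInf_le ⟨0, fun R hR => hR.1.le⟩
      exact ⟨hhiA,
        szlenkDeriv_subset_ball hB hA' (ι A) (hrange A hA') (hnormeq A hA') ε hε0 hε2⟩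
  constructor
  · exact tendsto_of_tendsto_of_tendsto_of_le_of_le' hlot hhit
      (hbounds.mono fun A h => h.1)
      (hbounds.mono fun A h => h.2.1.trans h.2.2)
  · exact tendsto_of_tendsto_of_tendsto_of_le_of_le' hlot hhit
      (hbounds.mono fun A h => h.1.trans h.2.1)
      (hbounds.mono fun A h => h.2.2)
end
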